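/- arXiv:1702.07053 — 4 statements merged into one kernel-verified Lean document; each statement's English description precedes it below -/
import Mathlib

section
/- Let d ≥ 1 and let 1 ≤ p₁ < p₂ ≤ q < ∞. Then there exists a constant C > 0 such that for every measurable function f on ℝ^d, ‖f‖_{M^{p₁}_q} ≤ C · ‖f‖_{wM^{p₂}_q}; in particular, the weak Morrey space wM^{p₂}_q is contained in the (strong) Morrey space M^{p₁}_q. -/
/-!
On a ball `B` with normalised Lebesgue measure `μ_B = |B|⁻¹ • vol|_B`, the weak Morrey bound says
`γ · μ_B{|f| > γ}^{1/p₂} ≤ M := ‖f‖_{wM^{p₂}_q} / |B|^{1/q}` for every `γ > 0`, i.e. `f` is in weak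
`L^{p₂}(μ_B)` with quasi-norm at most `M`. On a space of total mass at most one, weak `L^{p₂}`
embeds into `L^{p₁}` for `p₁ < p₂`: in the layer-cake formula
`∫ |f|^{p₁} dμ_B = p₁ ∫₀^∞ t^{p₁-1} μ_B{|f| > t} dt` bound the distribution function by `1` for
`t ≤ M` and by `(M/t)^{p₂}` for `t > M`, which gives
`∫ |f|^{p₁} dμ_B ≤ p₁ (1 + 1/(p₂ - p₁)) M^{p₁}`.
Multiplying the `p₁`-th root by `|B|^{1/q}` and taking the supremum over balls gives the theorem.
-/

open MeasureTheory Metric ENNReal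

/-- The Morrey norm `‖f‖_{M^p_q}` of a measurable function `f : ℝ^d → ℝ`:
`sup_{a ∈ ℝ^d, r > 0} |B(a,r)|^{1/q} · ((1/|B(a,r)|) ∫_{B(a,r)} |f(y)|^p dy)^{1/p}`. -/
noncomputable def morreyNorm (d : ℕ) (p q : ℝ)
    (f : EuclideanSpace ℝ (Fin d) → ℝ) : ℝ≥0∞ :=
  ⨆ (a : EuclideanSpace ℝ (Fin d)) (r : ℝ) (_ : 0 < r),
    volume (ball a r) ^ (1 / q) *
      ((volume (ball a r))⁻¹ *
        ∫⁻ y in ball a r, ENNReal.ofReal (|f y| ^ p)) ^ (1 / p)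

/-- The weak Morrey quasi-norm `‖f‖_{wM^p_q} := sup_{γ>0} γ · ‖χ_{{x : |f x| > γ}}‖_{M^p_q}`. -/
noncomputable def weakMorreyNorm (d : ℕ) (p q : ℝ)
    (f : EuclideanSpace ℝ (Fin d) → ℝ) : ℝ≥0∞ :=
  ⨆ (γ : ℝ) (_ : 0 < γ),
    ENNReal.ofReal γ * morreyNorm d p q (Set.indicator {x | γ < |f x|} 1)

open Set

theorem lintegral_Ioi_rpow_of_lt {a : ℝ} (ha : a < -1) {c : ℝ} (hc : 0 < c) :
    ∫⁻ t in Ioi c, ENNReal.ofReal (t ^ a) = ENNReal.ofReal (-c ^ (a + 1) / (a + 1)) := by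
  rw [← ofReal_integral_eq_lintegral_ofReal (integrableOn_Ioi_rpow_of_lt ha hc)
    ((ae_restrict_iff' measurableSet_Ioi).mpr
      (Filter.Eventually.of_forall fun t ht => Real.rpow_nonneg (hc.trans ht).le _)),
    integral_Ioi_rpow_of_lt ha hc]

section WeakToStrong

variable {α : Type*} [MeasurableSpace α] {μ : Measure α} {g : α → ℝ} {p₁ p₂ : ℝ}

theorem lintegral_rpow_le_of_meas_lt_le (hg₀ : 0 ≤ᵐ[μ] g) (hg : AEMeasurable g μ)
    (hp₁ : 1 ≤ p₁) (hp₁₂ : p₁ < p₂) (hμ : μ univ ≤ 1) {M : ℝ} (hM : 0 < M)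
    (h_tail : ∀ t, M < t → μ {x | t < g x} ≤ ENNReal.ofReal ((M / t) ^ p₂)) :
    ∫⁻ x, ENNReal.ofReal (g x ^ p₁) ∂μ ≤
      ENNReal.ofReal (p₁ * (1 + (p₂ - p₁)⁻¹) * M ^ p₁) := by
  have h_low : ∫⁻ t in Ioc 0 M, μ {x | t < g x} * ENNReal.ofReal (t ^ (p₁ - 1)) ≤
      ENNReal.ofReal (M ^ p₁) :=
    calc ∫⁻ t in Ioc 0 M, μ {x | t < g x} * ENNReal.ofReal (t ^ (p₁ - 1))
        ≤ ∫⁻ _ in Ioc 0 M, ENNReal.ofReal (M ^ (p₁ - 1)) :=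
          setLIntegral_mono measurable_const fun t ht =>
            (mul_le_mul' ((measure_mono (subset_univ _)).trans hμ)
              (ENNReal.ofReal_le_ofReal (Real.rpow_le_rpow ht.1.le ht.2 (by linarith)))).trans_eq
              (one_mul _)
      _ = ENNReal.ofReal (M ^ p₁) := by
          rw [setLIntegral_const, Real.volume_Ioc, sub_zero, ← ENNReal.ofReal_mul (by positivity),
            ← Real.rpow_add_one hM.ne', sub_add_cancel]
  have h_high : ∫⁻ t in Ioi M, μ {x | t < g x} * ENNReal.ofReal (t ^ (p₁ - 1)) ≤
      ENNReal.ofReal ((p₂ - p₁)⁻¹ * M ^ p₁) :=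
    calc ∫⁻ t in Ioi M, μ {x | t < g x} * ENNReal.ofReal (t ^ (p₁ - 1))
        ≤ ∫⁻ t in Ioi M, ENNReal.ofReal (M ^ p₂) * ENNReal.ofReal (t ^ (p₁ - 1 - p₂)) := by
          refine setLIntegral_mono (by fun_prop) fun t ht => ?_
          have ht₀ : 0 < t := hM.trans ht
          calc μ {x | t < g x} * ENNReal.ofReal (t ^ (p₁ - 1))
              ≤ ENNReal.ofReal ((M / t) ^ p₂) * ENNReal.ofReal (t ^ (p₁ - 1)) := by
                gcongr; exact h_tail t ht
            _ = ENNReal.ofReal (M ^ p₂) * ENNReal.ofReal (t ^ (p₁ - 1 - p₂)) := by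
                rw [← ENNReal.ofReal_mul (by positivity), ← ENNReal.ofReal_mul (by positivity),
                  Real.div_rpow hM.le ht₀.le, Real.rpow_sub ht₀ (p₁ - 1)]
                field_simp
      _ = ENNReal.ofReal ((p₂ - p₁)⁻¹ * M ^ p₁) := by
          rw [lintegral_const_mul _ (by fun_prop), lintegral_Ioi_rpow_of_lt (by linarith) hM,
            ← ENNReal.ofReal_mul (by positivity), show p₁ - 1 - p₂ + 1 = p₁ - p₂ by ring,
            Real.rpow_sub hM]
          have : p₂ - p₁ ≠ 0 := by linarith
          have : p₁ - p₂ ≠ 0 := by linarith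
          congr 1
          field_simp
          ring
  calc ∫⁻ x, ENNReal.ofReal (g x ^ p₁) ∂μ
      = ENNReal.ofReal p₁ * ((∫⁻ t in Ioc 0 M, μ {x | t < g x} * ENNReal.ofReal (t ^ (p₁ - 1))) +
          ∫⁻ t in Ioi M, μ {x | t < g x} * ENNReal.ofReal (t ^ (p₁ - 1))) := by
        rw [lintegral_rpow_eq_lintegral_meas_lt_mul μ hg₀ hg (by linarith),
          ← Ioc_union_Ioi_eq_Ioi hM.le, lintegral_union measurableSet_Ioi (Ioc_disjoint_Ioi le_rfl)]
    _ ≤ ENNReal.ofReal p₁ * (ENNReal.ofReal (M ^ p₁) + ENNReal.ofReal ((p₂ - p₁)⁻¹ * M ^ p₁)) := by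
        gcongr
    _ = ENNReal.ofReal (p₁ * (1 + (p₂ - p₁)⁻¹) * M ^ p₁) := by
        have : 0 < p₂ - p₁ := sub_pos.mpr hp₁₂
        rw [← ENNReal.ofReal_add (by positivity) (by positivity),
          ← ENNReal.ofReal_mul (by linarith)]
        ring_nf

theorem lintegral_rpow_rpow_le_of_mul_meas_rpow_le (hg₀ : 0 ≤ᵐ[μ] g) (hg : AEMeasurable g μ)
    (hp₁ : 1 ≤ p₁) (hp₁₂ : p₁ < p₂) (hμ : μ univ ≤ 1) {M : ℝ≥0∞}
    (h_weak : ∀ t, 0 < t → ENNReal.ofReal t * μ {x | t < g x} ^ (1 / p₂) ≤ M) :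
    (∫⁻ x, ENNReal.ofReal (g x ^ p₁) ∂μ) ^ (1 / p₁) ≤
      ENNReal.ofReal ((p₁ * (1 + (p₂ - p₁)⁻¹)) ^ (1 / p₁)) * M := by
  have hp₁₀ : 0 < p₁ := by linarith
  have hp₂₀ : 0 < p₂ := by linarith
  have hK : 0 < p₁ * (1 + (p₂ - p₁)⁻¹) := by
    have : 0 < p₂ - p₁ := sub_pos.mpr hp₁₂
    positivity
  rcases eq_top_or_lt_top M with rfl | hM
  · rw [ENNReal.mul_top (ENNReal.ofReal_pos.mpr (Real.rpow_pos_of_pos hK _)).ne']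
    exact le_top
  obtain ⟨m, hm, rfl⟩ : ∃ m : ℝ, 0 ≤ m ∧ ENNReal.ofReal m = M :=
    ⟨M.toReal, toReal_nonneg, ofReal_toReal hM.ne⟩
  have h_tail : ∀ t, 0 < t → μ {x | t < g x} ≤ ENNReal.ofReal ((m / t) ^ p₂) := by
    intro t ht
    have h := h_weak t ht
    rw [mul_comm, ← ENNReal.le_div_iff_mul_le (Or.inl (ofReal_pos.mpr ht).ne')
      (Or.inl ofReal_ne_top), ← ENNReal.ofReal_div_of_pos ht, one_div,
      ENNReal.rpow_inv_le_iff hp₂₀] at h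
    rwa [← ENNReal.ofReal_rpow_of_nonneg (by positivity) hp₂₀.le]
  rcases hm.eq_or_lt with rfl | hm₀
  · have h_zero : ∫⁻ x, ENNReal.ofReal (g x ^ p₁) ∂μ = 0 := by
      rw [lintegral_rpow_eq_lintegral_meas_lt_mul μ hg₀ hg hp₁₀,
        setLIntegral_congr_fun measurableSet_Ioi (g := fun _ => 0) fun t ht => ?_, lintegral_zero,
        mul_zero]
      simpa [Real.zero_rpow hp₂₀.ne'] using Or.inl (h_tail t ht)
    rw [h_zero, ENNReal.zero_rpow_of_pos (by positivity)]
    exact bot_le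
  calc (∫⁻ x, ENNReal.ofReal (g x ^ p₁) ∂μ) ^ (1 / p₁)
      ≤ ENNReal.ofReal (p₁ * (1 + (p₂ - p₁)⁻¹) * m ^ p₁) ^ (1 / p₁) := by
        gcongr
        exact lintegral_rpow_le_of_meas_lt_le hg₀ hg hp₁ hp₁₂ hμ hm₀ fun t ht =>
          h_tail t (hm₀.trans ht)
    _ = ENNReal.ofReal ((p₁ * (1 + (p₂ - p₁)⁻¹)) ^ (1 / p₁)) * ENNReal.ofReal m := by
        rw [ENNReal.ofReal_rpow_of_nonneg (by positivity) (by positivity),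
          Real.mul_rpow hK.le (by positivity), ← Real.rpow_mul hm, mul_one_div_cancel hp₁₀.ne',
          Real.rpow_one, ENNReal.ofReal_mul (by positivity)]

end WeakToStrong

theorem lintegral_ofReal_abs_indicator_one_rpow {α : Type*} [MeasurableSpace α] {μ : Measure α}
    {E : Set α} (hE : MeasurableSet E) {p : ℝ} (hp : 0 < p) :
    ∫⁻ y, ENNReal.ofReal (|E.indicator (1 : α → ℝ) y| ^ p) ∂μ = μ E := by
  rw [← lintegral_indicator_one hE]
  refine lintegral_congr fun y => ?_
  by_cases hy : y ∈ E <;> simp [hy, Real.zero_rpow hp.ne']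

section Morrey

variable {d : ℕ} {p q : ℝ}

theorem le_morreyNorm (f : EuclideanSpace ℝ (Fin d) → ℝ) (a : EuclideanSpace ℝ (Fin d)) {r : ℝ}
    (hr : 0 < r) :
    volume (ball a r) ^ (1 / q) *
        ((volume (ball a r))⁻¹ * ∫⁻ y in ball a r, ENNReal.ofReal (|f y| ^ p)) ^ (1 / p) ≤
      morreyNorm d p q f :=
  le_iSup_of_le a (le_iSup₂_of_le r hr le_rfl)

theorem le_weakMorreyNorm (f : EuclideanSpace ℝ (Fin d) → ℝ) {γ : ℝ} (hγ : 0 < γ) :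
    ENNReal.ofReal γ * morreyNorm d p q ({x | γ < |f x|}.indicator 1) ≤ weakMorreyNorm d p q f :=
  le_iSup₂_of_le γ hγ le_rfl

theorem ofReal_mul_avg_meas_lt_rpow_le_weakMorreyNorm_div {f : EuclideanSpace ℝ (Fin d) → ℝ}
    (hf : Measurable f) (hp : 0 < p)
    (a : EuclideanSpace ℝ (Fin d)) {r : ℝ} (hr : 0 < r) {γ : ℝ} (hγ : 0 < γ) :
    ENNReal.ofReal γ *
        ((volume (ball a r))⁻¹ * volume ({x | γ < |f x|} ∩ ball a r)) ^ (1 / p) ≤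
      weakMorreyNorm d p q f / volume (ball a r) ^ (1 / q) := by
  have hv₀ : volume (ball a r) ≠ 0 := (measure_ball_pos volume a hr).ne'
  have hv : volume (ball a r) ≠ ⊤ := measure_ball_lt_top.ne
  have hE : MeasurableSet {x | γ < |f x|} := measurableSet_lt measurable_const hf.abs
  rw [ENNReal.le_div_iff_mul_le (Or.inl (ENNReal.rpow_pos (pos_iff_ne_zero.mpr hv₀) hv).ne')
    (Or.inl (ENNReal.rpow_ne_top_of_ne_zero hv₀ hv))]
  calc ENNReal.ofReal γ *
        ((volume (ball a r))⁻¹ * volume ({x | γ < |f x|} ∩ ball a r)) ^ (1 / p) *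
          volume (ball a r) ^ (1 / q)
      = ENNReal.ofReal γ * (volume (ball a r) ^ (1 / q) * ((volume (ball a r))⁻¹ *
          ∫⁻ y in ball a r, ENNReal.ofReal (|{x | γ < |f x|}.indicator 1 y| ^ p)) ^ (1 / p)) := by
        rw [lintegral_ofReal_abs_indicator_one_rpow hE hp, Measure.restrict_apply hE]
        ring
    _ ≤ ENNReal.ofReal γ * morreyNorm d p q ({x | γ < |f x|}.indicator 1) := by
        gcongr
        exact le_morreyNorm _ a hr
    _ ≤ weakMorreyNorm d p q f := le_weakMorreyNorm f hγ

end Morrey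

theorem weakMorrey_subset_morrey_general (d : ℕ) (p₁ p₂ q : ℝ)
    (hp₁ : 1 ≤ p₁) (hp₁₂ : p₁ < p₂) :
    ∃ C : ℝ, 0 < C ∧ ∀ f : EuclideanSpace ℝ (Fin d) → ℝ, Measurable f →
      morreyNorm d p₁ q f ≤ ENNReal.ofReal C * weakMorreyNorm d p₂ q f := by
  have hK : 0 < p₁ * (1 + (p₂ - p₁)⁻¹) := by
    have : 0 < p₂ - p₁ := sub_pos.mpr hp₁₂
    positivity
  refine ⟨(p₁ * (1 + (p₂ - p₁)⁻¹)) ^ (1 / p₁), Real.rpow_pos_of_pos hK _,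
    fun f hf => iSup_le fun a => iSup₂_le fun r hr => ?_⟩
  set v := volume (ball a r)
  have hv₀ : v ≠ 0 := (measure_ball_pos volume a hr).ne'
  have hv : v ≠ ⊤ := measure_ball_lt_top.ne
  have hE : ∀ t : ℝ, MeasurableSet {x | t < |f x|} :=
    fun t => measurableSet_lt measurable_const hf.abs
  have h_avg := lintegral_rpow_rpow_le_of_mul_meas_rpow_le
    (μ := v⁻¹ • volume.restrict (ball a r)) (M := weakMorreyNorm d p₂ q f / v ^ (1 / q))
    (ae_of_all _ fun x => abs_nonneg (f x)) hf.abs.aemeasurable hp₁ hp₁₂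
    (by rw [Measure.smul_apply, Measure.restrict_apply_univ, smul_eq_mul,
      ENNReal.inv_mul_cancel hv₀ hv])
    fun t ht => by
      rw [Measure.smul_apply, Measure.restrict_apply (hE t), smul_eq_mul]
      exact ofReal_mul_avg_meas_lt_rpow_le_weakMorreyNorm_div hf (by linarith) a hr ht
  rw [lintegral_smul_measure, smul_eq_mul] at h_avg
  calc v ^ (1 / q) * (v⁻¹ * ∫⁻ y in ball a r, ENNReal.ofReal (|f y| ^ p₁)) ^ (1 / p₁)
      ≤ v ^ (1 / q) * (ENNReal.ofReal ((p₁ * (1 + (p₂ - p₁)⁻¹)) ^ (1 / p₁)) *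
          (weakMorreyNorm d p₂ q f / v ^ (1 / q))) := by gcongr
    _ = ENNReal.ofReal ((p₁ * (1 + (p₂ - p₁)⁻¹)) ^ (1 / p₁)) * weakMorreyNorm d p₂ q f := by
        rw [mul_left_comm,
          ENNReal.mul_div_cancel (ENNReal.rpow_pos (pos_iff_ne_zero.mpr hv₀) hv).ne'
            (ENNReal.rpow_ne_top_of_ne_zero hv₀ hv)]

/-- If `1 ≤ p₁ < p₂ ≤ q < ∞`, then there is `C > 0` with
`‖f‖_{M^{p₁}_q} ≤ C ‖f‖_{wM^{p₂}_q}` for every measurable `f`, hence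
`wM^{p₂}_q ⊆ M^{p₁}_q`. -/
theorem weakMorrey_subset_morrey (d : ℕ) (hd : 1 ≤ d) (p₁ p₂ q : ℝ)
    (hp₁ : 1 ≤ p₁) (hp₁₂ : p₁ < p₂) (hp₂q : p₂ ≤ q) :
    ∃ C : ℝ, 0 < C ∧ ∀ f : EuclideanSpace ℝ (Fin d) → ℝ, Measurable f →
      morreyNorm d p₁ q f ≤ ENNReal.ofReal C * weakMorreyNorm d p₂ q f :=
  weakMorrey_subset_morrey_general d p₁ p₂ q hp₁ hp₁₂
end

section
/- Let d ≥ 1 and let 1 ≤ p₁ < p₂ < q < ∞. Then there exists a measurable function f on ℝ^d such that ‖f‖_{M^{p₁}_q} < ∞ and ‖f‖_{wM^{p₂}_q} = ∞; that is, the inclusion wM^{p₂}_q ⊆ M^{p₁}_q is proper. -/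
open MeasureTheory Metric ENNReal

/-!
The counterexample is the indicator of `E = ⋃_{n ∈ ℕ^d} B(x_n, 1/2)` with centres
`x_n = ((n_i + 1)^s)_i`, `s = q / (q - p₁)`. Since `t ↦ t^s` is superadditive, the centres are
`1`-separated and a ball of radius `r ≥ 1` meets only `O(r^{d/s})` of the small balls, so
`|E ∩ B(a, r)| ≲ r^{d/s}` for every `r > 0`; with this choice of `s` the `M^{p₁}_q` quantity is then
bounded uniformly in `r`. On the other hand `B(0, C N^s)` contains `N^d` of the small balls, so the
`M^{p₂}_q` quantity of `χ_E` grows like `N^e` with `e = d (p₂ - p₁) / (p₂ (q - p₁)) > 0`. Finally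
`{|χ_E| > 1/2} = E`, so `‖χ_E‖_{wM^{p₂}_q} ≥ ‖χ_E‖_{M^{p₂}_q} / 2 = ∞`.
-/

lemma abs_sub_rpow_le_abs_rpow_sub {x y s : ℝ} (hx : 0 ≤ x) (hy : 0 ≤ y) (hs : 1 ≤ s) :
    |x - y| ^ s ≤ |x ^ s - y ^ s| := by
  wlog hyx : y ≤ x generalizing x y
  · rw [abs_sub_comm, abs_sub_comm (x ^ s)]
    exact this hy hx (le_of_not_ge hyx)
  have h := Real.add_rpow_le_rpow_add (sub_nonneg.2 hyx) hy hs
  rw [sub_add_cancel] at h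
  rw [abs_of_nonneg (sub_nonneg.2 hyx)]
  exact (le_sub_iff_add_le.2 h).trans (le_abs_self _)

namespace EuclideanSpace

variable {d : ℕ}

lemma abs_apply_sub_le_dist (x y : EuclideanSpace ℝ (Fin d)) (i : Fin d) :
    |x i - y i| ≤ dist x y := by
  rw [dist_eq_norm]
  exact PiLp.norm_apply_le (x - y) i

lemma norm_le_sqrt_mul_of_forall_abs_le {x : EuclideanSpace ℝ (Fin d)} {c : ℝ} (hc : 0 ≤ c)
    (h : ∀ i, |x i| ≤ c) : ‖x‖ ≤ √d * c := by
  rw [EuclideanSpace.norm_eq]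
  calc √(∑ i, ‖x i‖ ^ 2) ≤ √(∑ _i : Fin d, c ^ 2) := by
        gcongr with i
        exact h i
    _ = √d * c := by
        rw [Finset.sum_const, Finset.card_univ, Fintype.card_fin, nsmul_eq_mul,
          Real.sqrt_mul (Nat.cast_nonneg d), Real.sqrt_sq hc]

end EuclideanSpace

lemma card_piFinset_Icc_sub_add_le {d : ℕ} (c : Fin d → ℕ) (K : ℕ) :
    (Fintype.piFinset fun i => Finset.Icc (c i - K) (c i + K)).card ≤ (2 * K + 1) ^ d := by
  rw [Fintype.card_piFinset]
  calc ∏ i, (Finset.Icc (c i - K) (c i + K)).card ≤ ∏ _i : Fin d, (2 * K + 1) :=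
        Finset.prod_le_prod' fun i _ => by rw [Nat.card_Icc]; omega
    _ = (2 * K + 1) ^ d := by simp

noncomputable def powLatticePoint (d : ℕ) (s : ℝ) (n : Fin d → ℕ) : EuclideanSpace ℝ (Fin d) :=
  WithLp.toLp 2 fun i => ((n i : ℝ) + 1) ^ s

def powLatticeBalls (d : ℕ) (s : ℝ) : Set (EuclideanSpace ℝ (Fin d)) :=
  ⋃ n : Fin d → ℕ, ball (powLatticePoint d s n) (1 / 2)

section powLattice

variable {d : ℕ} {s : ℝ}

@[simp]
lemma powLatticePoint_apply (n : Fin d → ℕ) (i : Fin d) :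
    powLatticePoint d s n i = ((n i : ℝ) + 1) ^ s :=
  rfl

lemma measurableSet_powLatticeBalls : MeasurableSet (powLatticeBalls d s) :=
  MeasurableSet.iUnion fun _ => measurableSet_ball

lemma abs_sub_rpow_le_dist_powLatticePoint (hs : 1 ≤ s) (m n : Fin d → ℕ) (i : Fin d) :
    |(m i : ℝ) - n i| ^ s ≤ dist (powLatticePoint d s m) (powLatticePoint d s n) :=
  calc |(m i : ℝ) - n i| ^ s = |((m i : ℝ) + 1) - ((n i : ℝ) + 1)| ^ s := by ring_nf
    _ ≤ |((m i : ℝ) + 1) ^ s - ((n i : ℝ) + 1) ^ s| :=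
        abs_sub_rpow_le_abs_rpow_sub (by positivity) (by positivity) hs
    _ ≤ _ := by
        simpa only [powLatticePoint_apply] using
          EuclideanSpace.abs_apply_sub_le_dist (powLatticePoint d s m) (powLatticePoint d s n) i

lemma one_le_dist_powLatticePoint (hs : 1 ≤ s) {m n : Fin d → ℕ} (hmn : m ≠ n) :
    1 ≤ dist (powLatticePoint d s m) (powLatticePoint d s n) := by
  obtain ⟨i, hi⟩ := Function.ne_iff.1 hmn
  have h : (1 : ℝ) ≤ |(m i : ℝ) - n i| := by
    have h : (1 : ℤ) ≤ |(m i : ℤ) - n i| := Int.one_le_abs (sub_ne_zero.2 (by exact_mod_cast hi))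
    exact_mod_cast h
  exact (Real.one_le_rpow h (by linarith)).trans (abs_sub_rpow_le_dist_powLatticePoint hs m n i)

lemma abs_sub_le_of_dist_powLatticePoint_le (hs : 1 ≤ s) {m n : Fin d → ℕ} {ρ : ℝ}
    (h : dist (powLatticePoint d s m) (powLatticePoint d s n) ≤ ρ) (i : Fin d) :
    |(m i : ℝ) - n i| ≤ ρ ^ s⁻¹ :=
  (Real.le_rpow_inv_iff_of_pos (abs_nonneg _) (dist_nonneg.trans h) (by linarith)).2
    ((abs_sub_rpow_le_dist_powLatticePoint hs m n i).trans h)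

lemma norm_powLatticePoint_le (hs : 1 ≤ s) {n : Fin d → ℕ} {N : ℕ} (hn : ∀ i, n i < N) :
    ‖powLatticePoint d s n‖ ≤ √d * (N : ℝ) ^ s := by
  refine EuclideanSpace.norm_le_sqrt_mul_of_forall_abs_le (by positivity) fun i => ?_
  have hle : (n i : ℝ) + 1 ≤ N := by exact_mod_cast hn i
  rw [powLatticePoint_apply]
  calc |((n i : ℝ) + 1) ^ s| = ((n i : ℝ) + 1) ^ s := abs_of_nonneg (by positivity)
    _ ≤ (N : ℝ) ^ s := by gcongr

lemma powLatticeBalls_inter_ball_subset (hs : 1 ≤ s) {a : EuclideanSpace ℝ (Fin d)} {r : ℝ}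
    {n₀ : Fin d → ℕ} (hn₀ : (ball (powLatticePoint d s n₀) (1 / 2) ∩ ball a r).Nonempty) :
    powLatticeBalls d s ∩ ball a r ⊆
      ⋃ n ∈ Fintype.piFinset fun i =>
          Finset.Icc (n₀ i - ⌈(2 * r + 1) ^ s⁻¹⌉₊) (n₀ i + ⌈(2 * r + 1) ^ s⁻¹⌉₊),
        ball (powLatticePoint d s n) (1 / 2) := by
  obtain ⟨y, hy₀, hya⟩ := hn₀
  rintro z ⟨hz, hza⟩
  obtain ⟨n, hzn⟩ := Set.mem_iUnion.1 hz
  refine Set.mem_biUnion (Fintype.mem_piFinset.2 fun i => ?_) hzn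
  have hdist : dist (powLatticePoint d s n) (powLatticePoint d s n₀) ≤ 2 * r + 1 := by
    have := dist_triangle4 (powLatticePoint d s n) z a (powLatticePoint d s n₀)
    have := dist_triangle a y (powLatticePoint d s n₀)
    rw [mem_ball] at hzn hza hya hy₀
    rw [dist_comm] at hzn hya
    linarith
  have hK := abs_le.1 ((abs_sub_le_of_dist_powLatticePoint_le hs hdist i).trans (Nat.le_ceil _))
  have hlow : (n₀ i : ℝ) ≤ n i + ⌈(2 * r + 1) ^ s⁻¹⌉₊ := by linarith
  have hupp : (n i : ℝ) ≤ n₀ i + ⌈(2 * r + 1) ^ s⁻¹⌉₊ := by linarith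
  norm_cast at hlow hupp
  exact Finset.mem_Icc.2 ⟨by omega, hupp⟩

/-- At most `(2 ⌈(2r+1)^{1/s}⌉ + 1)^d ≤ (9 r^{1/s})^d` of the small balls meet `B(a, r)`. -/
lemma volume_powLatticeBalls_inter_ball_le_of_one_le (hs : 1 ≤ s) (a : EuclideanSpace ℝ (Fin d))
    {r : ℝ} (hr : 1 ≤ r) :
    volume (powLatticeBalls d s ∩ ball a r) ≤
      ENNReal.ofReal ((9 * r ^ s⁻¹) ^ d) * volume (ball (0 : EuclideanSpace ℝ (Fin d)) 1) := by
  rcases (powLatticeBalls d s ∩ ball a r).eq_empty_or_nonempty with h | ⟨y, hy, hya⟩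
  · simp [h]
  obtain ⟨n₀, hy₀⟩ := Set.mem_iUnion.1 hy
  set K := ⌈(2 * r + 1) ^ s⁻¹⌉₊
  have hK : (2 * K + 1 : ℝ) ≤ 9 * r ^ s⁻¹ := by
    have hs' : s⁻¹ ≤ 1 := inv_le_one_of_one_le₀ hs
    have h1 : (1 : ℝ) ≤ r ^ s⁻¹ := Real.one_le_rpow hr (by positivity)
    have h3 : (3 * r) ^ s⁻¹ ≤ 3 * r ^ s⁻¹ := by
      rw [Real.mul_rpow (by norm_num) (by linarith)]
      gcongr
      simpa using Real.rpow_le_rpow_of_exponent_le (by norm_num : (1 : ℝ) ≤ 3) hs'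
    have h2 : (2 * r + 1) ^ s⁻¹ ≤ (3 * r) ^ s⁻¹ := by gcongr; linarith
    linarith [Nat.ceil_lt_add_one (by positivity : 0 ≤ (2 * r + 1) ^ s⁻¹)]
  have hsmall : ∀ n, volume (ball (powLatticePoint d s n) (1 / 2)) ≤
      volume (ball (0 : EuclideanSpace ℝ (Fin d)) 1) := fun n => by
    rw [Measure.addHaar_ball_center]
    exact measure_mono (ball_subset_ball (by norm_num))
  calc volume (powLatticeBalls d s ∩ ball a r)
      ≤ ∑ n ∈ Fintype.piFinset fun i => Finset.Icc (n₀ i - K) (n₀ i + K),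
          volume (ball (powLatticePoint d s n) (1 / 2)) :=
        (measure_mono (powLatticeBalls_inter_ball_subset hs ⟨y, hy₀, hya⟩)).trans
          (measure_biUnion_finset_le _ _)
    _ ≤ ((2 * K + 1) ^ d : ℕ) * volume (ball (0 : EuclideanSpace ℝ (Fin d)) 1) := by
        grw [Finset.sum_le_sum fun n _ => hsmall n, Finset.sum_const, nsmul_eq_mul,
          card_piFinset_Icc_sub_add_le]
    _ ≤ ENNReal.ofReal ((9 * r ^ s⁻¹) ^ d) * volume (ball (0 : EuclideanSpace ℝ (Fin d)) 1) := by
        rw [← ENNReal.ofReal_natCast]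
        gcongr
        push_cast
        gcongr

lemma volume_powLatticeBalls_inter_ball_le [NeZero d] (hs : 1 ≤ s)
    (a : EuclideanSpace ℝ (Fin d)) {r : ℝ} (hr : 0 < r) :
    volume (powLatticeBalls d s ∩ ball a r) ≤
      ENNReal.ofReal ((9 * r ^ s⁻¹) ^ d) * volume (ball (0 : EuclideanSpace ℝ (Fin d)) 1) := by
  rcases le_total 1 r with hr1 | hr1
  · exact volume_powLatticeBalls_inter_ball_le_of_one_le hs a hr1
  calc volume (powLatticeBalls d s ∩ ball a r) ≤ volume (ball a r) :=
        measure_mono Set.inter_subset_right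
    _ = ENNReal.ofReal (r ^ d) * volume (ball (0 : EuclideanSpace ℝ (Fin d)) 1) := by
        rw [Measure.addHaar_ball _ _ hr.le, finrank_euclideanSpace_fin]
    _ ≤ ENNReal.ofReal ((9 * r ^ s⁻¹) ^ d) * volume (ball (0 : EuclideanSpace ℝ (Fin d)) 1) := by
        have := Real.self_le_rpow_of_le_one hr.le hr1 (inv_le_one_of_one_le₀ hs)
        gcongr
        linarith [Real.rpow_nonneg hr.le s⁻¹]

lemma le_volume_powLatticeBalls_inter_ball [NeZero d] (hs : 1 ≤ s) {N : ℕ} (hN : 1 ≤ N) :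
    ENNReal.ofReal (((N : ℝ) / 2) ^ d) * volume (ball (0 : EuclideanSpace ℝ (Fin d)) 1) ≤
      volume (powLatticeBalls d s ∩ ball 0 ((√d + 1) * (N : ℝ) ^ s)) := by
  set G := Fintype.piFinset fun _ : Fin d => Finset.range N
  have hsub : ⋃ n ∈ G, ball (powLatticePoint d s n) (1 / 2) ⊆
      powLatticeBalls d s ∩ ball 0 ((√d + 1) * (N : ℝ) ^ s) := by
    refine Set.iUnion₂_subset fun n hn z hz => ⟨Set.mem_iUnion.2 ⟨n, hz⟩, ?_⟩
    have hn' : ∀ i, n i < N := fun i => Finset.mem_range.1 (Fintype.mem_piFinset.1 hn i)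
    have h1 : (1 : ℝ) ≤ (N : ℝ) ^ s := Real.one_le_rpow (by exact_mod_cast hN) (by linarith)
    rw [mem_ball_zero_iff]
    linarith [norm_lt_of_mem_ball hz, norm_powLatticePoint_le hs hn']
  have hdisj : (G : Set (Fin d → ℕ)).PairwiseDisjoint
      fun n => ball (powLatticePoint d s n) (1 / 2) := fun m _ n _ hmn =>
    ball_disjoint_ball (by linarith [one_le_dist_powLatticePoint hs hmn])
  calc ENNReal.ofReal (((N : ℝ) / 2) ^ d) * volume (ball (0 : EuclideanSpace ℝ (Fin d)) 1)
      = ∑ n ∈ G, volume (ball (powLatticePoint d s n) (1 / 2)) := by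
        simp only [Measure.addHaar_ball _ _ (by norm_num : (0 : ℝ) ≤ 1 / 2),
          finrank_euclideanSpace_fin, Finset.sum_const, nsmul_eq_mul, G, Fintype.card_piFinset,
          Finset.card_range, Finset.prod_const, Finset.card_univ, Fintype.card_fin]
        rw [← mul_assoc, ← ENNReal.ofReal_natCast, ← ENNReal.ofReal_mul (by positivity)]
        push_cast
        ring_nf
    _ = volume (⋃ n ∈ G, ball (powLatticePoint d s n) (1 / 2)) :=
        (measure_biUnion_finset hdisj fun _ _ => measurableSet_ball).symm
    _ ≤ _ := measure_mono hsub

end powLattice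

section morrey

variable {d : ℕ}

lemma morreyNorm_indicator_one {E : Set (EuclideanSpace ℝ (Fin d))} (hE : MeasurableSet E)
    {p : ℝ} (hp : p ≠ 0) (q : ℝ) :
    morreyNorm d p q (E.indicator 1) = ⨆ (a : EuclideanSpace ℝ (Fin d)) (r : ℝ) (_ : 0 < r),
      volume (ball a r) ^ (1 / q) * ((volume (ball a r))⁻¹ * volume (E ∩ ball a r)) ^ (1 / p) := by
  have hint : ∀ S, ∫⁻ y in S, ENNReal.ofReal (|E.indicator 1 y| ^ p) = volume (E ∩ S) := by
    intro S
    have h : (fun y => ENNReal.ofReal (|E.indicator (1 : EuclideanSpace ℝ (Fin d) → ℝ) y| ^ p)) = E.indicator 1 := by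
      funext y
      by_cases hy : y ∈ E <;> simp [hy, Real.zero_rpow hp]
    rw [h, lintegral_indicator_one hE, Measure.restrict_apply hE]
  simp only [morreyNorm, hint]

lemma ofReal_mul_morreyNorm_indicator_one_le_weakMorreyNorm (E : Set (EuclideanSpace ℝ (Fin d)))
    (p q : ℝ) {γ : ℝ} (hγ₀ : 0 < γ) (hγ₁ : γ < 1) :
    ENNReal.ofReal γ * morreyNorm d p q (E.indicator 1) ≤ weakMorreyNorm d p q (E.indicator 1) := by
  have hlevel : {x | γ < |E.indicator (1 : EuclideanSpace ℝ (Fin d) → ℝ) x|} = E := by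
    ext x
    by_cases hx : x ∈ E <;> simp [hx, hγ₁, hγ₀.le]
  unfold weakMorreyNorm
  exact le_iSup₂_of_le γ hγ₀ (by rw [hlevel])

/-- The Morrey quantity of `χ_E` on `B(a, r)` when `|E ∩ B(a, r)| = t |B(0, 1)|`. -/
lemma volume_ball_rpow_mul_rpow_eq [NeZero d] (a : EuclideanSpace ℝ (Fin d)) {p q r t : ℝ}
    (hp : 0 < p) (hr : 0 < r) (ht : 0 ≤ t) :
    volume (ball a r) ^ (1 / q) *
        ((volume (ball a r))⁻¹ *
          (ENNReal.ofReal t * volume (ball (0 : EuclideanSpace ℝ (Fin d)) 1))) ^ (1 / p) =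
      volume (ball (0 : EuclideanSpace ℝ (Fin d)) 1) ^ (1 / q) *
        ENNReal.ofReal (r ^ (d / q - d / p) * t ^ (1 / p)) := by
  have hrd : 0 < r ^ d := by positivity
  have hκ₀ : volume (ball (0 : EuclideanSpace ℝ (Fin d)) 1) ≠ 0 :=
    (measure_ball_pos volume _ one_pos).ne'
  rw [Measure.addHaar_ball _ _ hr.le, finrank_euclideanSpace_fin, ← ENNReal.div_eq_inv_mul,
    ENNReal.mul_div_mul_right _ _ hκ₀ measure_ball_lt_top.ne, ← ENNReal.ofReal_div_of_pos hrd,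
    ENNReal.mul_rpow_of_ne_top ofReal_ne_top measure_ball_lt_top.ne, ENNReal.ofReal_rpow_of_pos hrd,
    ENNReal.ofReal_rpow_of_nonneg (by positivity) (by positivity), mul_right_comm,
    ← ENNReal.ofReal_mul (by positivity), mul_comm]
  congr 2
  rw [Real.div_rpow ht hrd.le, ← Real.rpow_natCast_mul hr.le, ← Real.rpow_natCast_mul hr.le,
    Real.rpow_sub hr]
  ring_nf

end morrey

section powLatticeMorrey

variable {d : ℕ} [NeZero d] {p q : ℝ}

lemma morreyNorm_indicator_powLatticeBalls_lt_top (hp : 0 < p) (hpq : p < q) :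
    morreyNorm d p q ((powLatticeBalls d (q / (q - p))).indicator 1) < ⊤ := by
  have hq : 0 < q := hp.trans hpq
  have hs : 1 ≤ q / (q - p) := by rw [le_div_iff₀ (by linarith)]; linarith
  have hs_inv : (q / (q - p))⁻¹ = 1 - p / q := by rw [inv_div, sub_div, div_self hq.ne']
  refine lt_of_le_of_lt (b := volume (ball (0 : EuclideanSpace ℝ (Fin d)) 1) ^ (1 / q) *
    ENNReal.ofReal ((9 : ℝ) ^ (d / p))) ?_
    (mul_lt_top (rpow_lt_top_of_nonneg (by positivity) measure_ball_lt_top.ne) ofReal_lt_top)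
  rw [morreyNorm_indicator_one measurableSet_powLatticeBalls hp.ne']
  refine iSup_le fun a => iSup₂_le fun r hr => ?_
  have hexp : (d / q - d / p) + (1 - p / q) * (d * (1 / p)) = 0 := by field_simp; ring
  calc _ ≤ volume (ball a r) ^ (1 / q) * ((volume (ball a r))⁻¹ *
          (ENNReal.ofReal ((9 * r ^ (q / (q - p))⁻¹) ^ d) *
            volume (ball (0 : EuclideanSpace ℝ (Fin d)) 1))) ^ (1 / p) := by
        gcongr
        exact volume_powLatticeBalls_inter_ball_le hs a hr
    _ = volume (ball (0 : EuclideanSpace ℝ (Fin d)) 1) ^ (1 / q) *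
          ENNReal.ofReal ((9 : ℝ) ^ (d / p)) := by
        rw [volume_ball_rpow_mul_rpow_eq a hp hr (by positivity), hs_inv,
          ← Real.rpow_natCast_mul (by positivity), Real.mul_rpow (by norm_num) (by positivity),
          ← Real.rpow_mul hr.le, mul_left_comm, ← Real.rpow_add hr, hexp, Real.rpow_zero,
          mul_one, mul_one_div]

lemma le_morreyNorm_indicator_powLatticeBalls {s : ℝ} (hs : 1 ≤ s) (hp : 0 < p) {N : ℕ}
    (hN : 1 ≤ N) :
    volume (ball (0 : EuclideanSpace ℝ (Fin d)) 1) ^ (1 / q) *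
        ENNReal.ofReal (((√d + 1) * (N : ℝ) ^ s) ^ (d / q - d / p) * (((N : ℝ) / 2) ^ d) ^ (1 / p)) ≤
      morreyNorm d p q ((powLatticeBalls d s).indicator 1) := by
  have hR : 0 < (√d + 1) * (N : ℝ) ^ s := by
    have : (0 : ℝ) < N := by exact_mod_cast hN
    positivity
  rw [morreyNorm_indicator_one measurableSet_powLatticeBalls hp.ne',
    ← volume_ball_rpow_mul_rpow_eq 0 hp hR (by positivity)]
  refine le_iSup_of_le 0 (le_iSup₂_of_le _ hR ?_)
  gcongr
  exact le_volume_powLatticeBalls_inter_ball hs hN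

lemma morreyNorm_indicator_powLatticeBalls_eq_top {s : ℝ} (hs : 1 ≤ s) (hp : 0 < p)
    (he : 0 < s * (d / q - d / p) + d / p) :
    morreyNorm d p q ((powLatticeBalls d s).indicator 1) = ⊤ := by
  set c : ℝ := (√d + 1) ^ (d / q - d / p) / 2 ^ (d / p) with hc
  have hterm : ∀ N : ℕ, 1 ≤ N →
      ((√d + 1) * (N : ℝ) ^ s) ^ (d / q - d / p) * (((N : ℝ) / 2) ^ d) ^ (1 / p) =
        c * (N : ℝ) ^ (s * (d / q - d / p) + d / p) := fun N hN => by
    have hN₀ : (0 : ℝ) < N := by exact_mod_cast hN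
    rw [Real.mul_rpow (by positivity) (by positivity), ← Real.rpow_mul hN₀.le,
      ← Real.rpow_natCast_mul (by positivity), Real.div_rpow hN₀.le (by norm_num),
      Real.rpow_add hN₀, hc, mul_one_div]
    ring
  have hκ : volume (ball (0 : EuclideanSpace ℝ (Fin d)) 1) ^ (1 / q) ≠ 0 :=
    (rpow_pos (measure_ball_pos volume _ one_pos) measure_ball_lt_top.ne).ne'
  have hlim : Filter.Tendsto (fun N : ℕ => volume (ball (0 : EuclideanSpace ℝ (Fin d)) 1) ^ (1 / q) *
      ENNReal.ofReal (c * (N : ℝ) ^ (s * (d / q - d / p) + d / p))) Filter.atTop (nhds ⊤) := by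
    rw [← mul_top hκ]
    refine ENNReal.Tendsto.const_mul (tendsto_ofReal_atTop.comp ?_) (Or.inl top_ne_zero)
    exact ((tendsto_rpow_atTop he).comp tendsto_natCast_atTop_atTop).const_mul_atTop
      (by positivity)
  refine top_unique (le_of_tendsto hlim (Filter.eventually_atTop.2 ⟨1, fun N hN => ?_⟩))
  rw [← hterm N hN]
  exact le_morreyNorm_indicator_powLatticeBalls hs hp hN

end powLatticeMorrey

/-- If `1 ≤ p₁ < p₂ < q < ∞`, the inclusion `wM^{p₂}_q ⊆ M^{p₁}_q` is proper: there is
a measurable `f` with `‖f‖_{M^{p₁}_q} < ∞` and `‖f‖_{wM^{p₂}_q} = ∞`. -/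
theorem weakMorrey_subset_morrey_proper (d : ℕ) (hd : 1 ≤ d) (p₁ p₂ q : ℝ)
    (hp₁ : 1 ≤ p₁) (hp₁₂ : p₁ < p₂) (hp₂q : p₂ < q) :
    ∃ f : EuclideanSpace ℝ (Fin d) → ℝ, Measurable f ∧
      morreyNorm d p₁ q f < ⊤ ∧ weakMorreyNorm d p₂ q f = ⊤ := by
  have : NeZero d := ⟨by omega⟩
  set s := q / (q - p₁) with hs_def
  have hs : 1 ≤ s := by rw [le_div_iff₀ (by linarith)]; linarith
  have he : 0 < s * (d / q - d / p₂) + d / p₂ := by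
    have hd₀ : (0 : ℝ) < d := by exact_mod_cast hd
    have hexp : s * (d / q - d / p₂) + d / p₂ = d * (p₂ - p₁) / (p₂ * (q - p₁)) := by
      have hqp₁ : q - p₁ ≠ 0 := by linarith
      have hq : q ≠ 0 := by linarith
      have hp₂ : p₂ ≠ 0 := by linarith
      rw [hs_def]
      field_simp
      ring
    rw [hexp]
    exact div_pos (mul_pos hd₀ (by linarith)) (mul_pos (by linarith) (by linarith))
  refine ⟨(powLatticeBalls d s).indicator 1, measurable_one.indicator measurableSet_powLatticeBalls,
    morreyNorm_indicator_powLatticeBalls_lt_top (by linarith) (hp₁₂.trans hp₂q), top_unique ?_⟩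
  calc ⊤ = ENNReal.ofReal (1 / 2) * morreyNorm d p₂ q ((powLatticeBalls d s).indicator 1) := by
        rw [morreyNorm_indicator_powLatticeBalls_eq_top hs (by linarith) he, mul_top (by norm_num)]
    _ ≤ _ := ofReal_mul_morreyNorm_indicator_one_le_weakMorreyNorm _ _ _ (by norm_num) (by norm_num)
end

section
/- Let d ≥ 1 and let 1 ≤ pᵢ ≤ qᵢ < ∞ for i = 1, 2. Suppose there exists a constant C > 0 such that ‖f‖_{M^{p₁}_{q₁}} ≤ C · ‖f‖_{M^{p₂}_{q₂}} for every measurable function f on ℝ^d. Then q₁ = q₂ and p₁ ≤ p₂. -/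
open MeasureTheory Metric ENNReal

/-!
Testing the inequality on indicators of balls, whose `M^p_q` norm is `|B|^{1/q}` when `p ≤ q`,
gives `|B|^{1/q₁} ≤ C |B|^{1/q₂}` for balls of every volume, hence `q₁ = q₂ =: q`.

If moreover `p₂ < p₁`, let `E` be the union of the `M^d` cubes of side `ε ≤ 1` with corners in
`{0, …, M-1}^d`. Its density in any ball of radius `r ≥ 1` is at most `(1 + √d)^d ε^d` and its
volume is `M^d ε^d`, which gives `‖χ_E‖_{M^p_q} ≲ 1 + M^{d/q} ε^{d/p}` for `p ≤ q`; the ball of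
radius `(1 + √d) M` containing `E` gives `‖χ_E‖_{M^p_q} ≳ M^{d/q} ε^{d/p}`. For `ε = M^{-p₂/q}`
the `M^{p₂}_q` norms of `χ_E` stay bounded while the `M^{p₁}_q` norms grow like
`M^{(d/q)(1 - p₂/p₁)}`.
-/

open Filter Topology

/-- The quantity under the supremum in `morreyNorm`, for a ball of volume `V` on which
`∫ |f|^p = I`. -/
noncomputable def morreyTerm (p q : ℝ) (V I : ℝ≥0∞) : ℝ≥0∞ :=
  V ^ (1 / q) * (V⁻¹ * I) ^ (1 / p)

section MorreyTerm

variable {p q : ℝ} {N V W I J : ℝ≥0∞}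

lemma morreyTerm_mono_right (hp : 0 ≤ p) (hIJ : I ≤ J) :
    morreyTerm p q V I ≤ morreyTerm p q V J := by
  unfold morreyTerm
  gcongr

lemma morreyTerm_self (hV0 : V ≠ 0) (hV : V ≠ ⊤) : morreyTerm p q V V = V ^ (1 / q) := by
  simp [morreyTerm, ENNReal.inv_mul_cancel hV0 hV]

lemma morreyTerm_le_rpow_of_le (hp : 0 < p) (hpq : p ≤ q) (hV0 : V ≠ 0) (hV : V ≠ ⊤)
    (hWV : W ≤ V) : morreyTerm p q V W ≤ W ^ (1 / q) := by
  have hq : 0 ≤ 1 / q := by have := hp.trans_le hpq; positivity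
  have hle : V⁻¹ * W ≤ 1 := (mul_le_mul_right hWV _).trans (ENNReal.inv_mul_cancel hV0 hV).le
  calc morreyTerm p q V W ≤ V ^ (1 / q) * (V⁻¹ * W) ^ (1 / q) :=
        mul_le_mul_right (ENNReal.rpow_le_rpow_of_exponent_ge hle
          (one_div_le_one_div_of_le hp hpq)) _
    _ = W ^ (1 / q) := by
        rw [← ENNReal.mul_rpow_of_nonneg _ _ hq, ← mul_assoc, ENNReal.mul_inv_cancel hV0 hV,
          one_mul]

lemma morreyTerm_le_rpow (hp : 0 < p) (hpq : p ≤ q) (hV0 : V ≠ 0) (hV : V ≠ ⊤)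
    (hIV : I ≤ V) (hIW : I ≤ W) : morreyTerm p q V I ≤ W ^ (1 / q) := by
  have hq : 0 ≤ 1 / q := by have := hp.trans_le hpq; positivity
  calc morreyTerm p q V I ≤ morreyTerm p q V (min V W) :=
        morreyTerm_mono_right hp.le (le_min hIV hIW)
    _ ≤ min V W ^ (1 / q) := morreyTerm_le_rpow_of_le hp hpq hV0 hV (min_le_left _ _)
    _ ≤ W ^ (1 / q) := by gcongr; exact min_le_right _ _

lemma morreyTerm_antitone_left (hp : 0 < p) (hpq : p ≤ q) (hW0 : W ≠ 0) (hV : V ≠ ⊤)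
    (hWV : W ≤ V) : morreyTerm p q V I ≤ morreyTerm p q W I := by
  have hW : W ≠ ⊤ := ne_top_of_le_ne_top hV hWV
  have hV0 : V ≠ 0 := (hW0.bot_lt.trans_le hWV).ne'
  have hsplit : V⁻¹ * I = V⁻¹ * W * (W⁻¹ * I) := by
    rw [mul_assoc, ← mul_assoc W, ENNReal.mul_inv_cancel hW0 hW, one_mul]
  calc morreyTerm p q V I = morreyTerm p q V W * (W⁻¹ * I) ^ (1 / p) := by
        rw [morreyTerm, morreyTerm, hsplit, ENNReal.mul_rpow_of_nonneg _ _ (by positivity),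
          mul_assoc]
    _ ≤ W ^ (1 / q) * (W⁻¹ * I) ^ (1 / p) := by
        gcongr
        exact morreyTerm_le_rpow_of_le hp hpq hV0 hV hWV
    _ = morreyTerm p q W I := rfl

lemma morreyTerm_mul_mul (hN0 : N ≠ 0) (hN : N ≠ ⊤) (hV : V ≠ ⊤) :
    morreyTerm p q (N * V) (N * I) = N ^ (1 / q) * morreyTerm p q V I := by
  have hdensity : (N * V)⁻¹ * (N * I) = V⁻¹ * I := by
    rw [ENNReal.mul_inv (Or.inl hN0) (Or.inl hN), mul_mul_mul_comm,
      ENNReal.inv_mul_cancel hN0 hN, one_mul]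
  rw [morreyTerm, morreyTerm, hdensity, ENNReal.mul_rpow_of_ne_top hN hV, mul_assoc]

lemma morreyTerm_mul_right (hp : 0 ≤ p) :
    morreyTerm p q V (I * J) = morreyTerm p q V I * J ^ (1 / p) := by
  rw [morreyTerm, morreyTerm, ← mul_assoc V⁻¹, ENNReal.mul_rpow_of_nonneg _ _ (by positivity),
    mul_assoc]

end MorreyTerm

lemma ofReal_abs_indicator_one_rpow {α : Type*} {p : ℝ} (hp : p ≠ 0) (E : Set α) (y : α) :
    ENNReal.ofReal (|E.indicator 1 y| ^ p) = E.indicator 1 y := by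
  by_cases hy : y ∈ E <;> simp [hy, Real.zero_rpow hp]

noncomputable def unitBallVolume (d : ℕ) : ℝ≥0∞ :=
  volume (ball (0 : EuclideanSpace ℝ (Fin d)) 1)

section Euclidean

variable {d : ℕ} {p q : ℝ}

lemma unitBallVolume_ne_zero : unitBallVolume d ≠ 0 := (measure_ball_pos volume _ one_pos).ne'

lemma unitBallVolume_ne_top : unitBallVolume d ≠ ⊤ := measure_ball_lt_top.ne

lemma volume_ball_eq (hd : 0 < d) (a : EuclideanSpace ℝ (Fin d)) {r : ℝ} (hr : 0 ≤ r) :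
    volume (ball a r) = ENNReal.ofReal r ^ d * unitBallVolume d := by
  have : Nonempty (Fin d) := ⟨⟨0, hd⟩⟩
  rw [Measure.addHaar_ball volume a hr, finrank_euclideanSpace_fin, ENNReal.ofReal_pow hr,
    unitBallVolume]

lemma volume_ball_mul (hd : 0 < d) (a : EuclideanSpace ℝ (Fin d)) {s r : ℝ} (hs : 0 ≤ s)
    (hr : 0 ≤ r) : volume (ball a (s * r)) = ENNReal.ofReal s ^ d * volume (ball a r) := by
  rw [volume_ball_eq hd a (mul_nonneg hs hr), volume_ball_eq hd a hr, ENNReal.ofReal_mul hs,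
    mul_pow, mul_assoc]

lemma exists_volume_ball_eq (hd : 0 < d) {x : ℝ≥0∞} (hx0 : x ≠ 0) (hx : x ≠ ⊤) :
    ∃ R > 0, volume (ball (0 : EuclideanSpace ℝ (Fin d)) R) = x := by
  have hxω : x / unitBallVolume d ≠ ⊤ := ENNReal.div_ne_top hx unitBallVolume_ne_zero
  have hs : 0 < (x / unitBallVolume d).toReal :=
    ENNReal.toReal_pos (ENNReal.div_pos hx0 unitBallVolume_ne_top).ne' hxω
  refine ⟨(x / unitBallVolume d).toReal ^ (d : ℝ)⁻¹, by positivity, ?_⟩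
  rw [volume_ball_eq hd _ (by positivity), ← ENNReal.ofReal_pow (by positivity),
    Real.rpow_inv_natCast_pow hs.le hd.ne', ENNReal.ofReal_toReal hxω,
    ENNReal.div_mul_cancel unitBallVolume_ne_zero unitBallVolume_ne_top]

lemma dist_le_sqrt_mul_of_forall_abs_sub_le {x y : EuclideanSpace ℝ (Fin d)} {c : ℝ}
    (hc : 0 ≤ c) (h : ∀ i, |x i - y i| ≤ c) : dist x y ≤ √d * c := by
  have hK : (((Fintype.card (Fin d) : NNReal) ^ (1 / (2 : ℝ≥0∞)).toReal : NNReal) : ℝ) = √d := by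
    simp [Real.sqrt_eq_rpow]
  calc dist x y ≤ _ := (PiLp.antilipschitzWith_ofLp 2 fun _ : Fin d => ℝ).le_mul_dist x y
    _ ≤ √d * c := by
      rw [hK]
      gcongr
      exact (dist_pi_le_iff hc).2 fun i => (Real.dist_eq _ _).trans_le (h i)

lemma morreyNorm_indicator (hp : p ≠ 0) {E : Set (EuclideanSpace ℝ (Fin d))}
    (hE : MeasurableSet E) :
    morreyNorm d p q (E.indicator 1) =
      ⨆ (a : EuclideanSpace ℝ (Fin d)) (r : ℝ) (_ : 0 < r),
        morreyTerm p q (volume (ball a r)) (volume (E ∩ ball a r)) := by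
  simp_rw [morreyNorm, ofReal_abs_indicator_one_rpow hp, lintegral_indicator_one hE,
    Measure.restrict_apply hE, morreyTerm]

lemma rpow_le_morreyNorm_indicator_ball (hp : p ≠ 0) (a : EuclideanSpace ℝ (Fin d)) {R : ℝ}
    (hR : 0 < R) : volume (ball a R) ^ (1 / q) ≤ morreyNorm d p q ((ball a R).indicator 1) := by
  rw [morreyNorm_indicator hp measurableSet_ball]
  refine le_iSup_of_le a (le_iSup₂_of_le R hR ?_)
  rw [Set.inter_self, morreyTerm_self (measure_ball_pos volume a hR).ne' measure_ball_lt_top.ne]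

lemma morreyNorm_indicator_ball_le (hp : 0 < p) (hpq : p ≤ q) (a : EuclideanSpace ℝ (Fin d))
    (R : ℝ) : morreyNorm d p q ((ball a R).indicator 1) ≤ volume (ball a R) ^ (1 / q) := by
  rw [morreyNorm_indicator hp.ne' measurableSet_ball]
  refine iSup_le fun b => iSup₂_le fun r hr => ?_
  exact morreyTerm_le_rpow hp hpq (measure_ball_pos volume b hr).ne' measure_ball_lt_top.ne
    (measure_mono Set.inter_subset_right) (measure_mono Set.inter_subset_left)

end Euclidean

lemma eq_of_forall_rpow_le_mul_rpow {a b : ℝ} {c : ℝ≥0∞} (hc : c ≠ ⊤)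
    (h : ∀ x : ℝ≥0∞, x ≠ 0 → x ≠ ⊤ → x ^ a ≤ c * x ^ b) : a = b := by
  by_contra hab
  have hγ : a - b ≠ 0 := sub_ne_zero.2 hab
  have hc1 : c + 1 ≠ ⊤ := ENNReal.add_ne_top.2 ⟨hc, ENNReal.one_ne_top⟩
  set x := (c + 1) ^ (a - b)⁻¹
  have hx0 : x ≠ 0 := by simp [x, ENNReal.rpow_eq_zero_iff, hc1]
  have hx : x ≠ ⊤ := by simp [x, ENNReal.rpow_eq_top_iff, hc1]
  have hxb0 : x ^ b ≠ 0 := by simp [ENNReal.rpow_eq_zero_iff, hx0, hx]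
  have hxb : x ^ b ≠ ⊤ := by simp [ENNReal.rpow_eq_top_iff, hx0, hx]
  have hcx : (c + 1) * x ^ b ≤ c * x ^ b := by
    calc (c + 1) * x ^ b = x ^ (a - b) * x ^ b := by rw [ENNReal.rpow_inv_rpow hγ]
      _ = x ^ a := by rw [← ENNReal.rpow_add _ _ hx0 hx, sub_add_cancel]
      _ ≤ c * x ^ b := h x hx0 hx
  exact (ENNReal.lt_add_right hc one_ne_zero).not_ge ((ENNReal.mul_le_mul_iff_left hxb0 hxb).1 hcx)

theorem eq_of_morreyNorm_le_mul {d : ℕ} (hd : 0 < d) {p₁ q₁ p₂ q₂ : ℝ} (hp₁ : p₁ ≠ 0)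
    (hp₂ : 0 < p₂) (hpq₂ : p₂ ≤ q₂) {c : ℝ≥0∞} (hc : c ≠ ⊤)
    (h : ∀ f : EuclideanSpace ℝ (Fin d) → ℝ, Measurable f →
      morreyNorm d p₁ q₁ f ≤ c * morreyNorm d p₂ q₂ f) : q₁ = q₂ := by
  have hinv : 1 / q₁ = 1 / q₂ := eq_of_forall_rpow_le_mul_rpow hc fun x hx0 hx => by
    obtain ⟨R, hR, rfl⟩ := exists_volume_ball_eq hd hx0 hx
    calc _ ≤ morreyNorm d p₁ q₁ ((ball 0 R).indicator 1) :=
          rpow_le_morreyNorm_indicator_ball hp₁ 0 hR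
      _ ≤ c * morreyNorm d p₂ q₂ ((ball 0 R).indicator 1) :=
          h _ (measurable_const.indicator measurableSet_ball)
      _ ≤ _ := by gcongr; exact morreyNorm_indicator_ball_le hp₂ hpq₂ 0 R
  simpa using hinv

section LatticeCubes

variable {d M : ℕ} {ε : ℝ}

def cube (c : Fin d → ℝ) (l : ℝ) : Set (EuclideanSpace ℝ (Fin d)) :=
  WithLp.ofLp ⁻¹' Set.univ.pi fun i => Set.Ico (c i) (c i + l)

lemma measurableSet_cube (c : Fin d → ℝ) (l : ℝ) : MeasurableSet (cube c l) :=
  (PiLp.volume_preserving_ofLp (Fin d)).measurable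
    (MeasurableSet.univ_pi fun _ => measurableSet_Ico)

lemma volume_cube (c : Fin d → ℝ) (l : ℝ) :
    volume (cube c l) = ENNReal.ofReal l ^ d := by
  rw [cube, (PiLp.volume_preserving_ofLp (Fin d)).measure_preimage
    (MeasurableSet.univ_pi fun _ => measurableSet_Ico).nullMeasurableSet, Real.volume_pi_Ico]
  simp

lemma disjoint_cube_of_ne {l : ℝ} (hl : l ≤ 1) {k k' : Fin d → Fin M} (hkk' : k ≠ k') :
    Disjoint (cube (fun i => (k i : ℝ)) l) (cube (fun i => (k' i : ℝ)) l) := by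
  rw [Set.disjoint_left]
  intro x hx hx'
  obtain ⟨i, hi⟩ := Function.ne_iff.1 hkk'
  obtain ⟨h1, h2⟩ := hx i (Set.mem_univ i)
  obtain ⟨h3, h4⟩ := hx' i (Set.mem_univ i)
  have hlt : ((k i : ℕ) : ℝ) < (k' i : ℕ) + 1 := by linarith
  have hlt' : ((k' i : ℕ) : ℝ) < (k i : ℕ) + 1 := by linarith
  norm_cast at hlt hlt'
  exact hi (Fin.ext (by omega))

def latticeCubes (d M : ℕ) (ε : ℝ) : Set (EuclideanSpace ℝ (Fin d)) :=
  ⋃ k : Fin d → Fin M, cube (fun i => (k i : ℝ)) ε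

lemma measurableSet_latticeCubes : MeasurableSet (latticeCubes d M ε) :=
  MeasurableSet.iUnion fun _ => measurableSet_cube _ _

lemma volume_latticeCubes (hε1 : ε ≤ 1) :
    volume (latticeCubes d M ε) = (M : ℝ≥0∞) ^ d * ENNReal.ofReal ε ^ d := by
  rw [latticeCubes, measure_iUnion (fun _ _ h => disjoint_cube_of_ne hε1 h)
    fun _ => measurableSet_cube _ _]
  simp [volume_cube]

lemma latticeCubes_subset_ball (hM : 0 < M) (hε1 : ε ≤ 1) :
    latticeCubes d M ε ⊆ ball 0 ((1 + √d) * M) := by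
  intro x hx
  obtain ⟨k, hk⟩ := Set.mem_iUnion.1 hx
  have hcoord : ∀ i, |x i - (0 : EuclideanSpace ℝ (Fin d)) i| ≤ M := fun i => by
    obtain ⟨h1, h2⟩ := hk i (Set.mem_univ i)
    have hkM : ((k i : ℕ) : ℝ) + 1 ≤ M := by exact_mod_cast (k i).isLt
    have hk0 : (0 : ℝ) ≤ (k i : ℕ) := Nat.cast_nonneg _
    rw [PiLp.zero_apply, sub_zero, abs_le]
    constructor <;> linarith
  have hM' : (0 : ℝ) < M := by exact_mod_cast hM
  rw [mem_ball]
  calc dist x 0 ≤ √d * M := dist_le_sqrt_mul_of_forall_abs_sub_le hM'.le hcoord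
    _ < (1 + √d) * M := by linarith

lemma cube_one_subset_ball {c : Fin d → ℝ} (hε1 : ε ≤ 1) {a : EuclideanSpace ℝ (Fin d)} {r : ℝ}
    (hr : 1 ≤ r) (hmeet : (cube c ε ∩ ball a r).Nonempty) :
    cube c 1 ⊆ ball a ((1 + √d) * r) := by
  obtain ⟨x, hx, hxa⟩ := hmeet
  intro y hy
  have hxy : dist y x ≤ √d * 1 := dist_le_sqrt_mul_of_forall_abs_sub_le zero_le_one fun i => by
    obtain ⟨h1, h2⟩ := hx i (Set.mem_univ i)
    obtain ⟨h3, h4⟩ := hy i (Set.mem_univ i)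
    rw [abs_le]
    constructor <;> linarith
  rw [mem_ball] at hxa ⊢
  calc dist y a ≤ dist y x + dist x a := dist_triangle y x a
    _ < √d * 1 + r := by linarith
    _ ≤ (1 + √d) * r := by nlinarith [Real.sqrt_nonneg d]

lemma volume_latticeCubes_inter_ball_le (hε1 : ε ≤ 1)
    (a : EuclideanSpace ℝ (Fin d)) {r : ℝ} (hr : 1 ≤ r) :
    volume (latticeCubes d M ε ∩ ball a r)
      ≤ ENNReal.ofReal ε ^ d * volume (ball a ((1 + √d) * r)) := by
  classical
  set S := Finset.univ.filter fun k : Fin d → Fin M =>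
    (cube (fun i => (k i : ℝ)) ε ∩ ball a r).Nonempty
  have hcover : latticeCubes d M ε ∩ ball a r ⊆ ⋃ k ∈ S, cube (fun i => (k i : ℝ)) ε := by
    rintro x ⟨hxE, hxB⟩
    obtain ⟨k, hk⟩ := Set.mem_iUnion.1 hxE
    exact Set.mem_biUnion (Finset.mem_filter.2 ⟨Finset.mem_univ _, x, hk, hxB⟩) hk
  -- The unit cubes at the corners in `S` are disjoint, so their number is at most the volume of
  -- the enlarged ball containing them.
  have hunit : ⋃ k ∈ S, cube (fun i => (k i : ℝ)) 1 ⊆ ball a ((1 + √d) * r) :=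
    Set.iUnion₂_subset fun k hk => cube_one_subset_ball hε1 hr (Finset.mem_filter.1 hk).2
  calc volume (latticeCubes d M ε ∩ ball a r)
      ≤ ∑ k ∈ S, volume (cube (fun i => (k i : ℝ)) ε) :=
        (measure_mono hcover).trans (measure_biUnion_finset_le S _)
    _ = ENNReal.ofReal ε ^ d * ∑ k ∈ S, volume (cube (fun i => (k i : ℝ)) 1) := by
        simp [volume_cube, mul_comm]
    _ = ENNReal.ofReal ε ^ d * volume (⋃ k ∈ S, cube (fun i => (k i : ℝ)) 1) := by
        rw [measure_biUnion_finset (fun _ _ _ _ h => disjoint_cube_of_ne le_rfl h)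
          fun _ _ => measurableSet_cube _ _]
    _ ≤ ENNReal.ofReal ε ^ d * volume (ball a ((1 + √d) * r)) := by gcongr

end LatticeCubes

section LatticeCubesMorrey

variable {d M : ℕ} {p q ε : ℝ}

lemma morreyTerm_latticeCubes_le_of_one_le (hd : 0 < d) (hp : 0 < p) (hpq : p ≤ q)
    (hM : 0 < M) (hε1 : ε ≤ 1) (a : EuclideanSpace ℝ (Fin d)) {r : ℝ} (hr : 1 ≤ r) :
    morreyTerm p q (volume (ball a r)) (volume (latticeCubes d M ε ∩ ball a r))
      ≤ ((M : ℝ≥0∞) ^ d) ^ (1 / q) * unitBallVolume d ^ (1 / q) *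
        ((ENNReal.ofReal (1 + √d) ^ d + (unitBallVolume d)⁻¹) * ENNReal.ofReal ε ^ d) ^
          (1 / p) := by
  have hq : 0 ≤ 1 / q := by have := hp.trans_le hpq; positivity
  set ω := unitBallVolume d
  set K := ENNReal.ofReal (1 + √d) ^ d
  set N := (M : ℝ≥0∞) ^ d
  set e := ENNReal.ofReal ε ^ d
  have hA0 : volume (ball a r) ≠ 0 := (measure_ball_pos volume a (by linarith)).ne'
  have hA : volume (ball a r) ≠ ⊤ := measure_ball_lt_top.ne
  have hN0 : N ≠ 0 := pow_ne_zero _ (by exact_mod_cast hM.ne')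
  have hN : N ≠ ⊤ := ENNReal.pow_ne_top (ENNReal.natCast_ne_top M)
  have hballM : volume (ball a M) = N * ω := by
    rw [volume_ball_eq hd a M.cast_nonneg, ENNReal.ofReal_natCast]
  rcases le_total r M with hrM | hMr
  · have hI : volume (latticeCubes d M ε ∩ ball a r) ≤ volume (ball a r) * (K * e) :=
      (volume_latticeCubes_inter_ball_le hε1 a hr).trans_eq <| by
        rw [volume_ball_mul hd a (by positivity) (by linarith)]
        ring
    calc _ ≤ morreyTerm p q (volume (ball a r)) (volume (ball a r) * (K * e)) :=
          morreyTerm_mono_right hp.le hI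
      _ = volume (ball a r) ^ (1 / q) * (K * e) ^ (1 / p) := by
          rw [morreyTerm, ← mul_assoc, ENNReal.inv_mul_cancel hA0 hA, one_mul]
      _ ≤ (N * ω) ^ (1 / q) * ((K + ω⁻¹) * e) ^ (1 / p) := by
          rw [← hballM]
          gcongr
          exact le_self_add
      _ = _ := by rw [ENNReal.mul_rpow_of_nonneg _ _ hq]
  · calc _ ≤ morreyTerm p q (N * ω) (volume (latticeCubes d M ε ∩ ball a r)) :=
          morreyTerm_antitone_left hp hpq (mul_ne_zero hN0 unitBallVolume_ne_zero) hA
            (hballM ▸ measure_mono (ball_subset_ball hMr))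
      _ ≤ morreyTerm p q (N * ω) (N * e) :=
          morreyTerm_mono_right hp.le
            ((measure_mono Set.inter_subset_left).trans_eq (volume_latticeCubes hε1))
      _ = N ^ (1 / q) * (ω ^ (1 / q) * (ω⁻¹ * e) ^ (1 / p)) :=
          morreyTerm_mul_mul hN0 hN unitBallVolume_ne_top
      _ ≤ _ := by
          rw [← mul_assoc]
          gcongr
          exact le_add_self

theorem exists_morreyNorm_indicator_latticeCubes_le (hd : 0 < d) (hp : 0 < p) (hpq : p ≤ q) :
    ∃ a b : ℝ≥0∞, a ≠ ⊤ ∧ b ≠ ⊤ ∧ ∀ M : ℕ, 0 < M → ∀ ε : ℝ, ε ≤ 1 →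
      morreyNorm d p q ((latticeCubes d M ε).indicator 1)
        ≤ a + b * (((M : ℝ≥0∞) ^ d) ^ (1 / q) * (ENNReal.ofReal ε ^ d) ^ (1 / p)) := by
  have hq : 0 ≤ 1 / q := by have := hp.trans_le hpq; positivity
  have hK : ENNReal.ofReal (1 + √d) ^ d + (unitBallVolume d)⁻¹ ≠ ⊤ :=
    ENNReal.add_ne_top.2 ⟨ENNReal.pow_ne_top ENNReal.ofReal_ne_top,
      ENNReal.inv_ne_top.2 unitBallVolume_ne_zero⟩
  refine ⟨unitBallVolume d ^ (1 / q),
    unitBallVolume d ^ (1 / q) * (ENNReal.ofReal (1 + √d) ^ d + (unitBallVolume d)⁻¹) ^ (1 / p),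
    ENNReal.rpow_ne_top_of_nonneg hq unitBallVolume_ne_top,
    ENNReal.mul_ne_top (ENNReal.rpow_ne_top_of_nonneg hq unitBallVolume_ne_top)
      (ENNReal.rpow_ne_top_of_nonneg (by positivity) hK),
    fun M hM ε hε1 => ?_⟩
  rw [morreyNorm_indicator hp.ne' measurableSet_latticeCubes]
  refine iSup_le fun x => iSup₂_le fun r hr => ?_
  rcases le_total r 1 with hr1 | hr1
  · refine le_add_right (morreyTerm_le_rpow hp hpq (measure_ball_pos volume x hr).ne'
      measure_ball_lt_top.ne (measure_mono Set.inter_subset_right)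
      ((measure_mono Set.inter_subset_right).trans ?_))
    calc volume (ball x r) ≤ volume (ball x 1) := measure_mono (ball_subset_ball hr1)
      _ = unitBallVolume d := by simp [volume_ball_eq hd x zero_le_one]
  · refine le_add_left ((morreyTerm_latticeCubes_le_of_one_le hd hp hpq hM hε1 x hr1).trans_eq ?_)
    rw [ENNReal.mul_rpow_of_nonneg _ _ (by positivity)]
    ring

theorem exists_le_morreyNorm_indicator_latticeCubes (hd : 0 < d) (hp : 0 < p) :
    ∃ c : ℝ≥0∞, c ≠ 0 ∧ ∀ M : ℕ, 0 < M → ∀ ε : ℝ, ε ≤ 1 →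
      c * (((M : ℝ≥0∞) ^ d) ^ (1 / q) * (ENNReal.ofReal ε ^ d) ^ (1 / p))
        ≤ morreyNorm d p q ((latticeCubes d M ε).indicator 1) := by
  set σ := ENNReal.ofReal (1 + √d) ^ d * unitBallVolume d
  have hσ0 : σ ≠ 0 := mul_ne_zero (pow_ne_zero _ (by simp; positivity)) unitBallVolume_ne_zero
  have hσ : σ ≠ ⊤ := ENNReal.mul_ne_top (ENNReal.pow_ne_top ENNReal.ofReal_ne_top)
    unitBallVolume_ne_top
  refine ⟨morreyTerm p q σ 1, ?_, fun M hM ε hε1 => ?_⟩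
  · simp [morreyTerm, ENNReal.rpow_eq_zero_iff, hσ0, hσ]
  set N := (M : ℝ≥0∞) ^ d
  have hN0 : N ≠ 0 := pow_ne_zero _ (by exact_mod_cast hM.ne')
  have hN : N ≠ ⊤ := ENNReal.pow_ne_top (ENNReal.natCast_ne_top M)
  have hR : 0 < (1 + √d) * M := mul_pos (by positivity) (by exact_mod_cast hM)
  have hball : volume (ball (0 : EuclideanSpace ℝ (Fin d)) ((1 + √d) * M)) = N * σ := by
    rw [volume_ball_mul hd 0 (by positivity) M.cast_nonneg, volume_ball_eq hd 0 M.cast_nonneg,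
      ENNReal.ofReal_natCast]
    ring
  rw [morreyNorm_indicator hp.ne' measurableSet_latticeCubes]
  refine le_iSup_of_le 0 (le_iSup₂_of_le _ hR (le_of_eq ?_))
  rw [Set.inter_eq_left.2 (latticeCubes_subset_ball hM hε1), volume_latticeCubes hε1, hball,
    morreyTerm_mul_mul hN0 hN hσ, ← one_mul (ENNReal.ofReal ε ^ d),
    morreyTerm_mul_right hp.le, one_mul]
  ring

end LatticeCubesMorrey

lemma exists_lt_mul_natCast_pow_rpow {d : ℕ} (hd : d ≠ 0) {γ : ℝ} (hγ : 0 < γ) {κ B : ℝ≥0∞}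
    (hκ : κ ≠ 0) (hB : B ≠ ⊤) : ∃ M : ℕ, 0 < M ∧ B < κ * ((M : ℝ≥0∞) ^ d) ^ γ := by
  have hpow : Tendsto (fun M : ℕ => (M : ℝ≥0∞) ^ d) atTop (𝓝 ⊤) := by
    simpa [Function.comp_def, ENNReal.top_pow hd] using
      ((ENNReal.continuous_pow d).tendsto ⊤).comp ENNReal.tendsto_nat_nhds_top
  have hrpow : Tendsto (fun M : ℕ => ((M : ℝ≥0∞) ^ d) ^ γ) atTop (𝓝 ⊤) := by
    simpa [Function.comp_def, ENNReal.top_rpow_of_pos hγ] using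
      ((ENNReal.continuous_rpow_const (y := γ)).tendsto ⊤).comp hpow
  have hlim := ENNReal.Tendsto.const_mul (a := κ) hrpow (Or.inl ENNReal.top_ne_zero)
  rw [ENNReal.mul_top hκ] at hlim
  obtain ⟨M, hlt, hM⟩ :=
    ((hlim.eventually (eventually_gt_nhds hB.lt_top)).and (eventually_gt_atTop 0)).exists
  exact ⟨M, hM, hlt⟩

lemma natCast_pow_rpow_mul_ofReal_rpow_neg_pow {d M : ℕ} (hM : 0 < M) (s p q : ℝ) :
    ((M : ℝ≥0∞) ^ d) ^ (1 / q) * (ENNReal.ofReal ((M : ℝ) ^ (-(s / q))) ^ d) ^ (1 / p)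
      = ((M : ℝ≥0∞) ^ d) ^ ((1 - s / p) / q) := by
  have hM0 : (M : ℝ≥0∞) ^ d ≠ 0 := pow_ne_zero _ (by exact_mod_cast hM.ne')
  have hMt : (M : ℝ≥0∞) ^ d ≠ ⊤ := ENNReal.pow_ne_top (ENNReal.natCast_ne_top M)
  have hcomm : ((M : ℝ≥0∞) ^ (-(s / q))) ^ d = ((M : ℝ≥0∞) ^ d) ^ (-(s / q)) := by
    rw [← ENNReal.rpow_natCast, ← ENNReal.rpow_natCast, ← ENNReal.rpow_mul,
      ← ENNReal.rpow_mul, mul_comm]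
  rw [← ENNReal.ofReal_rpow_of_pos (by exact_mod_cast hM), ENNReal.ofReal_natCast, hcomm,
    ← ENNReal.rpow_mul, ← ENNReal.rpow_add _ _ hM0 hMt]
  congr 1
  ring

theorem le_of_morreyNorm_le_mul {d : ℕ} (hd : 0 < d) {p₁ p₂ q : ℝ} (hp₂ : 0 < p₂)
    (hpq₂ : p₂ ≤ q) {c : ℝ≥0∞} (hc : c ≠ ⊤)
    (h : ∀ f : EuclideanSpace ℝ (Fin d) → ℝ, Measurable f →
      morreyNorm d p₁ q f ≤ c * morreyNorm d p₂ q f) : p₁ ≤ p₂ := by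
  by_contra! hp
  have hq : 0 < q := hp₂.trans_le hpq₂
  obtain ⟨κ, hκ0, hlower⟩ := exists_le_morreyNorm_indicator_latticeCubes (q := q) hd (hp₂.trans hp)
  obtain ⟨a, b, ha, hb, hupper⟩ := exists_morreyNorm_indicator_latticeCubes_le hd hp₂ hpq₂
  have hγ : 0 < (1 - p₂ / p₁) / q := div_pos (sub_pos.2 ((div_lt_one (hp₂.trans hp)).2 hp)) hq
  obtain ⟨M, hM, hlt⟩ := exists_lt_mul_natCast_pow_rpow hd.ne' hγ hκ0
    (ENNReal.mul_ne_top hc (ENNReal.add_ne_top.2 ⟨ha, hb⟩))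
  set ε := (M : ℝ) ^ (-(p₂ / q))
  have hε1 : ε ≤ 1 := Real.rpow_le_one_of_one_le_of_nonpos (by exact_mod_cast hM)
    (neg_nonpos.2 (div_pos hp₂ hq).le)
  refine hlt.not_ge ?_
  calc κ * ((M : ℝ≥0∞) ^ d) ^ ((1 - p₂ / p₁) / q)
      = κ * (((M : ℝ≥0∞) ^ d) ^ (1 / q) * (ENNReal.ofReal ε ^ d) ^ (1 / p₁)) := by
        rw [natCast_pow_rpow_mul_ofReal_rpow_neg_pow hM]
    _ ≤ morreyNorm d p₁ q ((latticeCubes d M ε).indicator 1) := hlower M hM ε hε1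
    _ ≤ c * morreyNorm d p₂ q ((latticeCubes d M ε).indicator 1) :=
        h _ (measurable_const.indicator measurableSet_latticeCubes)
    _ ≤ c * (a + b * (((M : ℝ≥0∞) ^ d) ^ (1 / q) * (ENNReal.ofReal ε ^ d) ^ (1 / p₂))) := by
        gcongr
        exact hupper M hM ε hε1
    _ = c * (a + b) := by
        rw [natCast_pow_rpow_mul_ofReal_rpow_neg_pow hM, div_self hp₂.ne', sub_self, zero_div,
          ENNReal.rpow_zero, mul_one]

theorem morrey_inclusion_necessary_general (d : ℕ) (hd : 1 ≤ d) (p₁ q₁ p₂ q₂ : ℝ)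
    (hp₁ : 1 ≤ p₁) (hp₂ : 1 ≤ p₂) (hpq₂ : p₂ ≤ q₂)
    (C : ℝ)
    (h : ∀ f : EuclideanSpace ℝ (Fin d) → ℝ, Measurable f →
      morreyNorm d p₁ q₁ f ≤ ENNReal.ofReal C * morreyNorm d p₂ q₂ f) :
    q₁ = q₂ ∧ p₁ ≤ p₂ := by
  have hp₂0 : 0 < p₂ := zero_lt_one.trans_le hp₂
  obtain rfl : q₁ = q₂ :=
    eq_of_morreyNorm_le_mul hd (zero_lt_one.trans_le hp₁).ne' hp₂0 hpq₂ ENNReal.ofReal_ne_top h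
  exact ⟨rfl, le_of_morreyNorm_le_mul hd hp₂0 hpq₂ ENNReal.ofReal_ne_top h⟩

/-- Necessary condition for the inclusion `M^{p₂}_{q₂} ⊆ M^{p₁}_{q₁}` (with a norm bound):
it forces `q₁ = q₂` and `p₁ ≤ p₂`. -/
theorem morrey_inclusion_necessary (d : ℕ) (hd : 1 ≤ d) (p₁ q₁ p₂ q₂ : ℝ)
    (hp₁ : 1 ≤ p₁) (hpq₁ : p₁ ≤ q₁) (hp₂ : 1 ≤ p₂) (hpq₂ : p₂ ≤ q₂)
    (C : ℝ) (hC : 0 < C)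
    (h : ∀ f : EuclideanSpace ℝ (Fin d) → ℝ, Measurable f →
      morreyNorm d p₁ q₁ f ≤ ENNReal.ofReal C * morreyNorm d p₂ q₂ f) :
    q₁ = q₂ ∧ p₁ ≤ p₂ :=
  morrey_inclusion_necessary_general d hd p₁ q₁ p₂ q₂ hp₁ hp₂ hpq₂ C h
end

section
/- Let d ≥ 1 and 1 ≤ p < q < ∞. Then the function f(x) := |x|^{-d/q} on ℝ^d satisfies ‖f‖_{M^p_q} = |B(0,1)|^{1/q} · ( q·ω_{d-1} / ( d·(q-p)·|B(0,1)| ) )^{1/p}, where ω_{d-1} is the surface area of the unit sphere S^{d-1} ⊂ ℝ^d and |B(0,1)| is the Lebesgue measure of the unit ball in ℝ^d. -/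
open MeasureTheory Metric ENNReal

/-!
Write `β = d p / q < d`. In polar coordinates
`∫_{B(0,r)} |y|^{-β} dy = d |B(0,1)| ∫_0^r t^{d-1-β} dt = d / (d - β) · r^{d-β} |B(0,1)|`,
so the Morrey quotient of `f` on a centered ball does not depend on `r` and equals
`|B(0,1)|^{1/q} (q / (q - p))^{1/p}`, which is the claimed value because `ω_{d-1} = d |B(0,1)|`.
Off-center balls do no better: `B(a,r)` and `B(0,r)` have the same measure, and `|y|^{-β}` is at
most `r^{-β}` on `B(a,r) \ B(0,r)` and at least `r^{-β}` on `B(0,r) \ B(a,r)`.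
-/

open Set

lemma setLIntegral_le_setLIntegral_of_measure_eq {α : Type*} [MeasurableSpace α] {μ : Measure α}
    {A B : Set α} {f : α → ℝ≥0∞} {c : ℝ≥0∞} (hA : MeasurableSet A) (hB : MeasurableSet B)
    (hμ : μ A = μ B) (hμA : μ A ≠ ∞) (hle : ∀ᵐ x ∂μ, x ∈ A \ B → f x ≤ c)
    (hge : ∀ᵐ x ∂μ, x ∈ B \ A → c ≤ f x) :
    ∫⁻ x in A, f x ∂μ ≤ ∫⁻ x in B, f x ∂μ := by
  have hdiff : μ (A \ B) = μ (B \ A) := by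
    have hAB : μ (A ∩ B) ≠ ∞ := ne_top_of_le_ne_top hμA (measure_mono inter_subset_left)
    rw [← ENNReal.add_right_inj hAB, measure_inter_add_sdiff A hB, inter_comm,
      measure_inter_add_sdiff B hA, hμ]
  calc ∫⁻ x in A, f x ∂μ = ∫⁻ x in A ∩ B, f x ∂μ + ∫⁻ x in A \ B, f x ∂μ :=
        (lintegral_inter_add_sdiff _ A hB).symm
    _ ≤ ∫⁻ x in B ∩ A, f x ∂μ + ∫⁻ x in B \ A, c ∂μ := by
        rw [inter_comm, setLIntegral_const, ← hdiff, ← setLIntegral_const]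
        exact add_le_add_right (lintegral_mono_ae ((ae_restrict_iff' (hA.diff hB)).2 hle)) _
    _ ≤ ∫⁻ x in B ∩ A, f x ∂μ + ∫⁻ x in B \ A, f x ∂μ :=
        add_le_add_right (lintegral_mono_ae ((ae_restrict_iff' (hB.diff hA)).2 hge)) _
    _ = ∫⁻ x in B, f x ∂μ := lintegral_inter_add_sdiff _ B hA

lemma lintegral_Ioo_rpow {s r : ℝ} (hs : -1 < s) (hr : 0 ≤ r) :
    ∫⁻ y in Ioo 0 r, ENNReal.ofReal (y ^ s) = ENNReal.ofReal (r ^ (s + 1) / (s + 1)) := by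
  rw [Measure.restrict_congr_set Ioo_ae_eq_Ioc, ← ofReal_integral_eq_lintegral_ofReal
      (intervalIntegral.intervalIntegrable_rpow' hs).1
      ((ae_restrict_iff' measurableSet_Ioc).2 (.of_forall fun y hy => Real.rpow_nonneg hy.1.le _)),
    ← intervalIntegral.integral_of_le hr, integral_rpow (.inl hs),
    Real.zero_rpow (by linarith), sub_zero]

lemma antitoneOn_abs_rpow_neg_rpow {c p : ℝ} (hc : 0 ≤ c) (hp : 0 ≤ p) :
    AntitoneOn (fun t : ℝ => |t ^ (-c)| ^ p) (Ioi 0) := fun s hs t _ hst => by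
  dsimp only
  rw [abs_of_nonneg (Real.rpow_nonneg hs.le _),
    abs_of_nonneg (Real.rpow_nonneg (hs.trans_le hst).le _)]
  exact Real.rpow_le_rpow (Real.rpow_nonneg (hs.trans_le hst).le _)
    (Real.rpow_le_rpow_of_nonpos hs hst (neg_nonpos.2 hc)) hp

lemma ofReal_rpow_mul_inv_mul_ofReal_rpow {B : ℝ≥0∞} (hB0 : B ≠ 0) (hBtop : B ≠ ∞)
    {r k n β p q : ℝ} (hr : 0 < r) (hk : 0 < k) (hq : 0 ≤ q) (hnβ : n / q = β / p) :
    (ENNReal.ofReal (r ^ n) * B) ^ (1 / q) *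
        ((ENNReal.ofReal (r ^ n) * B)⁻¹ * (ENNReal.ofReal (k * r ^ (n - β)) * B)) ^ (1 / p) =
      B ^ (1 / q) * ENNReal.ofReal k ^ (1 / p) := by
  have hrn : 0 < r ^ n := Real.rpow_pos_of_pos hr n
  have hmean : (ENNReal.ofReal (r ^ n) * B)⁻¹ * (ENNReal.ofReal (k * r ^ (n - β)) * B)
      = ENNReal.ofReal (k * r ^ (-β)) := by
    rw [ENNReal.mul_inv (.inl (ENNReal.ofReal_pos.2 hrn).ne') (.inl ENNReal.ofReal_ne_top),
      mul_mul_mul_comm, ENNReal.inv_mul_cancel hB0 hBtop, mul_one,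
      ← ENNReal.ofReal_inv_of_pos hrn, ← ENNReal.ofReal_mul (inv_nonneg.2 hrn.le)]
    congr 1
    rw [Real.rpow_sub hr, Real.rpow_neg hr.le]
    field_simp
  rw [hmean, ENNReal.mul_rpow_of_nonneg _ _ (by positivity), ENNReal.ofReal_rpow_of_pos hrn,
    ENNReal.ofReal_rpow_of_pos (by positivity), ENNReal.ofReal_rpow_of_pos hk, mul_right_comm,
    ← ENNReal.ofReal_mul (by positivity), mul_comm]
  congr 2
  rw [Real.mul_rpow hk.le (by positivity), ← Real.rpow_mul hr.le, ← Real.rpow_mul hr.le,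
    mul_left_comm, ← Real.rpow_add hr,
    show n * (1 / q) + -β * (1 / p) = 0 by rw [← div_eq_mul_one_div, hnβ]; ring,
    Real.rpow_zero, mul_one]

section MorreyQuotient

variable {E : Type*} [NormedAddCommGroup E] [MeasurableSpace E]

noncomputable def morreyQuotient (μ : Measure E) (p q : ℝ) (f : E → ℝ) (a : E) (r : ℝ) : ℝ≥0∞ :=
  μ (ball a r) ^ (1 / q) *
    ((μ (ball a r))⁻¹ * ∫⁻ y in ball a r, ENNReal.ofReal (|f y| ^ p) ∂μ) ^ (1 / p)

lemma morreyNorm_eq_iSup_morreyQuotient (d : ℕ) (p q : ℝ) (f : EuclideanSpace ℝ (Fin d) → ℝ) :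
    morreyNorm d p q f = ⨆ (a) (r : ℝ) (_ : 0 < r), morreyQuotient volume p q f a r :=
  rfl

lemma lintegral_ball_le_lintegral_ball_zero [BorelSpace E] [ProperSpace E] (μ : Measure E)
    [μ.IsAddHaarMeasure] [NullSingletonClass μ] {φ : ℝ → ℝ≥0∞} (hφ : AntitoneOn φ (Ioi 0))
    (a : E) (r : ℝ) :
    ∫⁻ x in ball a r, φ ‖x‖ ∂μ ≤ ∫⁻ x in ball 0 r, φ ‖x‖ ∂μ := by
  refine setLIntegral_le_setLIntegral_of_measure_eq (c := φ r) measurableSet_ball measurableSet_ball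
    (Measure.addHaar_ball_center μ a r) measure_ball_lt_top.ne (.of_forall fun x hx => ?_) ?_
  · have hr : 0 < r := pos_of_mem_ball hx.1
    have hxr : r ≤ ‖x‖ := by simpa [mem_ball_zero_iff] using hx.2
    exact hφ hr (hr.trans_le hxr) hxr
  · filter_upwards [μ.ae_ne 0] with x hx0 hx
    have hxr : ‖x‖ < r := mem_ball_zero_iff.1 hx.1
    exact hφ (norm_pos_iff.2 hx0) (norm_pos_iff.2 hx0 |>.trans hxr) hxr.le

lemma morreyQuotient_le_morreyQuotient_zero [BorelSpace E] [ProperSpace E] (μ : Measure E)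
    [μ.IsAddHaarMeasure] [NullSingletonClass μ] {p : ℝ} (hp : 0 ≤ p) (q : ℝ) {g : ℝ → ℝ}
    (hg : AntitoneOn (fun t => |g t| ^ p) (Ioi 0)) (a : E) (r : ℝ) :
    morreyQuotient μ p q (fun x => g ‖x‖) a r ≤ morreyQuotient μ p q (fun x => g ‖x‖) 0 r := by
  rw [morreyQuotient, morreyQuotient, Measure.addHaar_ball_center]
  gcongr μ (ball 0 r) ^ _ * ((μ (ball 0 r))⁻¹ * ?_) ^ _
  exact lintegral_ball_le_lintegral_ball_zero μ
    (fun s hs t ht hst => ENNReal.ofReal_le_ofReal (hg hs ht hst)) a r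

end MorreyQuotient

section Polar

local notation "dim" => Module.finrank ℝ

variable {E : Type*} [NormedAddCommGroup E] [NormedSpace ℝ E] [MeasurableSpace E] [BorelSpace E]
  [FiniteDimensional ℝ E] [Nontrivial E] (μ : Measure E) [μ.IsAddHaarMeasure]

lemma lintegral_fun_norm_addHaar {f : ℝ → ℝ≥0∞} (hf : Measurable f) :
    ∫⁻ x, f ‖x‖ ∂μ =
      dim E * μ (ball 0 1) * ∫⁻ y in Ioi (0 : ℝ), ENNReal.ofReal (y ^ (dim E - 1)) * f y :=
  calc ∫⁻ x, f ‖x‖ ∂μ = ∫⁻ x : ({(0 : E)}ᶜ : Set E), f ‖x.1‖ ∂(μ.comap (↑)) := by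
        rw [lintegral_subtype_comap (measurableSet_singleton _).compl fun x => f ‖x‖,
          restrict_compl_singleton]
    _ = ∫⁻ x, f x.2 ∂μ.toSphere.prod (.volumeIoiPow (dim E - 1)) := by
        simpa using μ.measurePreserving_homeomorphUnitSphereProd.lintegral_comp_emb
          (Homeomorph.measurableEmbedding _) (f ∘ Subtype.val ∘ Prod.snd)
    _ = μ.toSphere univ * ∫⁻ x : Ioi (0 : ℝ), f x ∂.volumeIoiPow (dim E - 1) := by
        simpa using lintegral_prod_mul (μ := μ.toSphere) (f := fun _ => (1 : ℝ≥0∞))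
          aemeasurable_const (hf.comp measurable_subtype_coe).aemeasurable
    _ = _ := by
        rw [Measure.toSphere_apply_univ, Measure.volumeIoiPow,
          lintegral_withDensity_eq_lintegral_mul _ (by fun_prop)
            (by fun_prop : Measurable fun x : Ioi (0 : ℝ) => f x),
          ← lintegral_subtype_comap measurableSet_Ioi
            fun y => ENNReal.ofReal (y ^ (dim E - 1)) * f y]
        rfl

lemma lintegral_ball_zero_norm_rpow {β : ℝ} (hβ : β < dim E) {r : ℝ} (hr : 0 ≤ r) :
    ∫⁻ x in ball (0 : E) r, ENNReal.ofReal (‖x‖ ^ (-β)) ∂μ =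
      ENNReal.ofReal (dim E / (dim E - β) * r ^ (dim E - β)) * μ (ball 0 1) := by
  set g : ℝ → ℝ≥0∞ := fun t => ENNReal.ofReal (t ^ (-β))
  have hdim : 1 ≤ dim E := Module.finrank_pos
  have hradial : ∫⁻ x in ball (0 : E) r, g ‖x‖ ∂μ = ∫⁻ x, (Iio r).indicator g ‖x‖ ∂μ := by
    rw [← lintegral_indicator measurableSet_ball]
    congr 1 with x
    simp only [indicator, mem_ball_zero_iff, mem_Iio]
  have hpow : ∀ y ∈ Ioo 0 r, ENNReal.ofReal (y ^ (dim E - 1)) * g y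
      = ENNReal.ofReal (y ^ ((dim E : ℝ) - β - 1)) := fun y hy => by
    rw [← ENNReal.ofReal_mul (pow_nonneg hy.1.le _), ← Real.rpow_natCast, Nat.cast_sub hdim,
      ← Real.rpow_add hy.1, Nat.cast_one]
    ring_nf
  rw [hradial,
    lintegral_fun_norm_addHaar μ ((by fun_prop : Measurable g).indicator measurableSet_Iio)]
  simp_rw [← indicator_mul_right (Iio r) (fun y : ℝ => ENNReal.ofReal (y ^ (dim E - 1))) g]
  rw [setLIntegral_indicator measurableSet_Iio, inter_comm, Ioi_inter_Iio,
    setLIntegral_congr_fun measurableSet_Ioo hpow, lintegral_Ioo_rpow (by linarith) hr,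
    sub_add_cancel, mul_right_comm, ← ENNReal.ofReal_natCast, ← ENNReal.ofReal_mul (by positivity)]
  congr 2
  ring

lemma morreyQuotient_zero_norm_rpow {p q : ℝ} (hp : 0 < p) (hpq : p < q) {r : ℝ} (hr : 0 < r) :
    morreyQuotient μ p q (fun x => ‖x‖ ^ (-(dim E / q))) 0 r =
      μ (ball 0 1) ^ (1 / q) * ENNReal.ofReal (q / (q - p)) ^ (1 / p) := by
  set n : ℝ := ((dim E : ℕ) : ℝ)
  set β := n * p / q
  have hq : 0 < q := hp.trans hpq
  have hn : 0 < n := Nat.cast_pos.2 Module.finrank_pos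
  have hβ : β < n := by rw [div_lt_iff₀ hq]; nlinarith
  have hk : n / (n - β) = q / (q - p) := by
    rw [show n - β = n * (q - p) / q by simp only [β]; field_simp]
    field_simp
  have hintegrand : ∀ x : E, ENNReal.ofReal (|‖x‖ ^ (-(n / q))| ^ p)
      = ENNReal.ofReal (‖x‖ ^ (-β)) := fun x => by
    rw [abs_of_nonneg (by positivity), ← Real.rpow_mul (norm_nonneg x)]
    congr 2
    ring
  rw [morreyQuotient]
  simp only [hintegrand]
  rw [Measure.addHaar_ball μ _ hr.le, ← Real.rpow_natCast, lintegral_ball_zero_norm_rpow μ hβ hr.le,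
    hk]
  exact ofReal_rpow_mul_inv_mul_ofReal_rpow (measure_ball_pos μ _ one_pos).ne'
    measure_ball_lt_top.ne hr (div_pos hq (sub_pos.2 hpq)) hq.le
    (show n / q = n * p / q / p by rw [mul_div_right_comm, mul_div_cancel_right₀ _ hp.ne'])

lemma ofReal_mul_toSphere_univ_div {a b : ℝ} (hb : 0 < b) :
    ENNReal.ofReal a * μ.toSphere univ / (dim E * ENNReal.ofReal b * μ (ball 0 1)) =
      ENNReal.ofReal (a / b) := by
  have hdim : (dim E : ℝ≥0∞) ≠ 0 := Nat.cast_ne_zero.2 Module.finrank_pos.ne'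
  rw [Measure.toSphere_apply_univ, mul_left_comm, mul_assoc,
    ENNReal.mul_div_mul_left _ _ hdim (ENNReal.natCast_ne_top _),
    ENNReal.mul_div_mul_right _ _ (measure_ball_pos μ _ one_pos).ne' measure_ball_lt_top.ne,
    ENNReal.ofReal_div_of_pos hb]

end Polar

/-- For `1 ≤ p < q < ∞`, the Morrey norm of `|x|^{-d/q}` equals
`|B(0,1)|^{1/q} (q ω_{d-1} / (d (q-p) |B(0,1)|))^{1/p}`, where `ω_{d-1}` is the surface
area of the unit sphere. -/
theorem morreyNorm_rpow_eq (d : ℕ) (hd : 1 ≤ d) (p q : ℝ)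
    (hp : 1 ≤ p) (hpq : p < q) :
    morreyNorm d p q (fun x : EuclideanSpace ℝ (Fin d) => ‖x‖ ^ (-(d / q)))
      = volume (ball (0 : EuclideanSpace ℝ (Fin d)) 1) ^ (1 / q) *
        (ENNReal.ofReal q *
            (volume : Measure (EuclideanSpace ℝ (Fin d))).toSphere Set.univ /
          ((d : ℝ≥0∞) * ENNReal.ofReal (q - p) *
            volume (ball (0 : EuclideanSpace ℝ (Fin d)) 1))) ^ (1 / p) := by
  have : Nontrivial (EuclideanSpace ℝ (Fin d)) :=
    Module.nontrivial_of_finrank_pos (R := ℝ) (by rw [finrank_euclideanSpace_fin]; omega)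
  have hp0 : 0 < p := by linarith
  have hcentered := fun {r : ℝ} (hr : 0 < r) =>
    morreyQuotient_zero_norm_rpow (volume : Measure (EuclideanSpace ℝ (Fin d))) hp0 hpq hr
  have hconst := ofReal_mul_toSphere_univ_div (volume : Measure (EuclideanSpace ℝ (Fin d)))
    (a := q) (sub_pos.2 hpq)
  rw [finrank_euclideanSpace_fin] at hcentered hconst
  rw [morreyNorm_eq_iSup_morreyQuotient, hconst]
  refine le_antisymm (iSup_le fun a => iSup₂_le fun r hr => ?_)
    (le_iSup_of_le 0 <| le_iSup₂_of_le 1 one_pos (hcentered one_pos).ge)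
  exact (morreyQuotient_le_morreyQuotient_zero volume hp0.le q
    (antitoneOn_abs_rpow_neg_rpow (div_nonneg d.cast_nonneg (hp0.trans hpq).le) hp0.le) a r).trans
    (hcentered hr).le
end
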